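/- arXiv:2212.14826 — 2 statements merged into one kernel-verified Lean document; each statement's English description precedes it below -/
import Mathlib

section
/- Fix a > 0 and b ∈ (−1,1) and write (u,v) = (u_{a,b}, v_{a,b}). For pairs φ = (φ₁,φ₂) and ψ = (ψ₁,ψ₂) with φ₁, ψ₁ ∈ C¹(S²) and φ₂, ψ₂ smooth with compact support in S²∖{N,S}, define the bilinear form B[φ,ψ] = ∫_{S²} ( ∇_{g₀}φ₁·∇_{g₀}ψ₁ + e^{4u}∇_{g₀}φ₂·∇_{g₀}ψ₂ + 8 e^{4u}|∇_{g₀}v|² φ₁ψ₁ + 4 e^{4u} ψ₁ ∇_{g₀}v·∇_{g₀}φ₂ − 4 e^{4u} ψ₂ ∇_{g₀}v·∇_{g₀}φ₁ ) dvol_{g₀}. Then B is symmetric, B[φ,ψ] = B[ψ,φ], and nonnegative, B[φ,φ] ≥ 0, for all such pairs φ, ψ. -/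
open Real MeasureTheory Set Filter

noncomputable section

/-- `θ`-partial derivative of a function of `(θ, φ)`. -/
def pdθ (f : ℝ → ℝ → ℝ) : ℝ → ℝ → ℝ := fun θ φ => deriv (fun x => f x φ) θ

/-- `φ`-partial derivative of a function of `(θ, φ)`. -/
def pdφ (f : ℝ → ℝ → ℝ) : ℝ → ℝ → ℝ := fun θ φ => deriv (fun x => f θ x) φ

/-- coordinate derivative in direction `i` (`0 = θ`, `1 = φ`). -/
def pder2 (i : Fin 2) : (ℝ → ℝ → ℝ) → (ℝ → ℝ → ℝ) := if i = 0 then pdθ else pdφ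

/-- Christoffel symbols `Γ^m_{i j}` of the round metric on `S²` in `(θ, φ)`. -/
def christoffel (m i j : Fin 2) (θ : ℝ) : ℝ :=
  if m = 0 ∧ i = 1 ∧ j = 1 then -(Real.sin θ * Real.cos θ)
  else if m = 1 ∧ ((i = 0 ∧ j = 1) ∨ (i = 1 ∧ j = 0)) then Real.cos θ / Real.sin θ
  else 0

/-- covariant derivative (in the round metric) of a `k`-tensor on `S²`,
given by its coordinate components. -/
def covDer {k : ℕ} (T : (Fin k → Fin 2) → ℝ → ℝ → ℝ) :
    (Fin (k + 1) → Fin 2) → ℝ → ℝ → ℝ := fun I θ φ =>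
  pder2 (I 0) (T fun j => I j.succ) θ φ
    - ∑ j : Fin k, ∑ m : Fin 2,
        christoffel m (I 0) (I j.succ) θ *
          T (Function.update (fun j' => I j'.succ) j m) θ φ

/-- the `k`-th covariant derivative of a function on `S²`. -/
def covIter (f : ℝ → ℝ → ℝ) : (k : ℕ) → (Fin k → Fin 2) → ℝ → ℝ → ℝ
  | 0 => fun _ => f
  | k + 1 => covDer (covIter f k)

/-- inverse-metric weight used to compute tensor norms. -/
def sphWeight (i : Fin 2) (θ : ℝ) : ℝ := if i = 0 then 1 else (Real.sin θ ^ 2)⁻¹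

/-- `|∇_{g₀}^k f|`, the norm of the `k`-th covariant derivative in the round metric. -/
def covNorm (k : ℕ) (f : ℝ → ℝ → ℝ) (θ φ : ℝ) : ℝ :=
  Real.sqrt (∑ I : Fin k → Fin 2, (∏ j, sphWeight (I j) θ) * (covIter f k I θ φ) ^ 2)

/-- `∇_{g₀}f·∇_{g₀}h` on the round sphere. -/
def gradDotS2 (f g : ℝ → ℝ → ℝ) (θ φ : ℝ) : ℝ :=
  pdθ f θ φ * pdθ g θ φ + (Real.sin θ ^ 2)⁻¹ * pdφ f θ φ * pdφ g θ φ

/-- `|∇_{g₀}f|²` on the round sphere. -/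
def gradNormSqS2 (f : ℝ → ℝ → ℝ) (θ φ : ℝ) : ℝ := gradDotS2 f f θ φ

/-- `Δ_{g₀}f`, the round Laplacian in coordinates. -/
def lapS2 (f : ℝ → ℝ → ℝ) (θ φ : ℝ) : ℝ :=
  pdθ (pdθ f) θ φ + (Real.cos θ / Real.sin θ) * pdθ f θ φ +
    (Real.sin θ ^ 2)⁻¹ * pdφ (pdφ f) θ φ

/-- integral over `S²` with respect to `dvol_{g₀} = sinθ dθ dφ`. -/
def sphInt (f : ℝ → ℝ → ℝ) : ℝ :=
  ∫ θ in Ioo (0 : ℝ) π, (∫ φ in Ioo (0 : ℝ) (2 * π), f θ φ) * Real.sin θ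

/-- round distance between the points with coordinates `(θ, φ)` and `(θ', φ')`. -/
def sDist (θ φ θ' φ' : ℝ) : ℝ :=
  Real.arccos (Real.cos θ * Real.cos θ' + Real.sin θ * Real.sin θ' * Real.cos (φ - φ'))

/-- a function on `S²` (in coordinates), of class `C^k`, with bounded covariant
derivatives up to order `k`. -/
def CkSphere (k : ℕ) (f : ℝ → ℝ → ℝ) : Prop :=
  ContDiffOn ℝ k (fun p : ℝ × ℝ => f p.1 p.2) (Ioo 0 π ×ˢ (univ : Set ℝ)) ∧
  (∀ θ φ : ℝ, f θ (φ + 2 * π) = f θ φ) ∧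
  ∃ C : ℝ, ∀ j ≤ k, ∀ θ ∈ Ioo (0 : ℝ) π, ∀ φ : ℝ, covNorm j f θ φ ≤ C

/-- a smooth function on `S²` (in coordinates), with bounded covariant derivatives
of all orders. -/
def SmoothSphere (f : ℝ → ℝ → ℝ) : Prop :=
  ContDiffOn ℝ (⊤ : ℕ∞) (fun p : ℝ × ℝ => f p.1 p.2) (Ioo 0 π ×ˢ (univ : Set ℝ)) ∧
  (∀ θ φ : ℝ, f θ (φ + 2 * π) = f θ φ) ∧
  ∀ j : ℕ, ∃ C : ℝ, ∀ θ ∈ Ioo (0 : ℝ) π, ∀ φ : ℝ, covNorm j f θ φ ≤ C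
/-- Euclidean 3-space. -/
abbrev E3 := EuclideanSpace ℝ (Fin 3)

/-- the `i`-th standard basis vector. -/
def e3 (i : Fin 3) : E3 := EuclideanSpace.single i 1

/-- partial derivative in the `i`-th coordinate direction. -/
def pd3 (i : Fin 3) (f : E3 → ℝ) (x : E3) : ℝ := fderiv ℝ f x (e3 i)

/-- the Euclidean Laplacian `Δf`. -/
def lap3 (f : E3 → ℝ) (x : E3) : ℝ := ∑ i : Fin 3, pd3 i (fun y => pd3 i f y) x

/-- the Euclidean inner product of gradients, `∇f·∇g`. -/
def dot3 (f g : E3 → ℝ) (x : E3) : ℝ := ∑ i : Fin 3, pd3 i f x * pd3 i g x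

/-- the `z`-axis `Γ ⊆ ℝ³`. -/
def axisΓ : Set E3 := {x : E3 | x 0 = 0 ∧ x 1 = 0}

/-- the open unit ball `B₁ ⊆ ℝ³`. -/
def B1 : Set E3 := Metric.ball (0 : E3) 1

/-- the cylindrical radius `ρ = √(x₀² + x₁²)`. -/
def ρc (x : E3) : ℝ := Real.sqrt ((x 0) ^ 2 + (x 1) ^ 2)

/-- the point with spherical coordinates `(r, θ, φ)`. -/
def sph (r θ φ : ℝ) : E3 :=
  (EuclideanSpace.equiv (Fin 3) ℝ).symm
    ![r * Real.sin θ * Real.cos φ, r * Real.sin θ * Real.sin φ, r * Real.cos θ]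

/-- the point with cylindrical coordinates `(ρ, 0, z)`. -/
def cylPt (ρ z : ℝ) : E3 := (EuclideanSpace.equiv (Fin 3) ℝ).symm ![ρ, 0, z]

/-- the radial operator `r∂_r` on functions of spherical coordinates. -/
def Dr (F : ℝ → ℝ → ℝ → ℝ) : ℝ → ℝ → ℝ → ℝ :=
  fun r θ φ => r * deriv (fun s => F s θ φ) r

/-- `ρ`-partial derivative of a function of `(ρ, z)`. -/
def dρ (f : ℝ → ℝ → ℝ) (ρ z : ℝ) : ℝ := deriv (fun s => f s z) ρ

/-- `z`-partial derivative of a function of `(ρ, z)`. -/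
def dz (f : ℝ → ℝ → ℝ) (ρ z : ℝ) : ℝ := deriv (fun s => f ρ s) z

/-- a harmonic map `(u,v) : Ω → ℍ²` (horospherical coordinates, curvature `−2`). -/
def HarmonicPair (u v : E3 → ℝ) (Ω : Set E3) : Prop :=
  ContDiffOn ℝ 3 u Ω ∧ ContDiffOn ℝ 3 v Ω ∧
  ∀ x ∈ Ω, lap3 u x = 2 * Real.exp (4 * u x) * dot3 v v x ∧
    lap3 v x = -4 * dot3 u v x

/-- `f` is `C^{3,α}` on `s`: it is `C³` there and its third derivatives are
`α`-Hölder on compact subsets. -/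
def C3HolderOn (α : ℝ) (f : E3 → ℝ) (s : Set E3) : Prop :=
  ContDiffOn ℝ 3 f s ∧
  ∀ K : Set E3, K ⊆ s → IsCompact K →
    ∃ C : NNReal, HolderOnWith C α.toNNReal (iteratedFDerivWithin ℝ 3 f s) K

/-- `(f, plus its singular part) ∈ C^{3,α}(S²)` in coordinates: `C³` with bounded
covariant derivatives, `2π`-periodic in `φ`, and third covariant derivative
`α`-Hölder (componentwise) with respect to the round distance. -/
def SphHolder3 (α : ℝ) (f : ℝ → ℝ → ℝ) : Prop :=
  ContDiffOn ℝ 3 (fun p : ℝ × ℝ => f p.1 p.2) (Ioo 0 π ×ˢ (univ : Set ℝ)) ∧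
  (∀ θ φ : ℝ, f θ (φ + 2 * π) = f θ φ) ∧
  ∃ C : ℝ, (∀ k ≤ 3, ∀ θ ∈ Ioo (0 : ℝ) π, ∀ φ : ℝ, covNorm k f θ φ ≤ C) ∧
    ∀ I : Fin 3 → Fin 2, ∀ θ ∈ Ioo (0 : ℝ) π, ∀ θ' ∈ Ioo (0 : ℝ) π, ∀ φ φ' : ℝ,
      |covIter f 3 I θ φ - covIter f 3 I θ' φ'| ≤ C * sDist θ φ θ' φ' ^ α

/-- the extreme-Kerr-type geodesic `u_{a,b}`. -/
def uab (a b θ : ℝ) : ℝ :=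
  -Real.log (Real.sin θ) -
    (1 / 2) * Real.log (2 * a * Real.sqrt (1 - b ^ 2) /
      (1 + Real.cos θ ^ 2 + 2 * b * Real.cos θ))

/-- the extreme-Kerr-type geodesic `v_{a,b}`. -/
def vab (a b θ : ℝ) : ℝ :=
  a * (b + b * Real.cos θ ^ 2 + 2 * Real.cos θ) /
    (1 + Real.cos θ ^ 2 + 2 * b * Real.cos θ)
/-- the bilinear form `B[φ,ψ]` of the second variation at `(u_{a,b}, v_{a,b})`. -/
def Bform (a b : ℝ) (f1 f2 p1 p2 : ℝ → ℝ → ℝ) : ℝ :=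
  sphInt fun θ φ =>
    gradDotS2 f1 p1 θ φ
      + Real.exp (4 * uab a b θ) * gradDotS2 f2 p2 θ φ
      + 8 * Real.exp (4 * uab a b θ) *
          gradNormSqS2 (fun θ' _ => vab a b θ') θ φ * f1 θ φ * p1 θ φ
      + 4 * Real.exp (4 * uab a b θ) * p1 θ φ *
          gradDotS2 (fun θ' _ => vab a b θ') f2 θ φ
      - 4 * Real.exp (4 * uab a b θ) * p2 θ φ *
          gradDotS2 (fun θ' _ => vab a b θ') f1 θ φ

/-- first components: `C¹` functions on `S²`. -/
def AdmFirst (f : ℝ → ℝ → ℝ) : Prop := CkSphere 1 f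

/-- second components: smooth functions compactly supported in `S²∖{N,S}`. -/
def AdmSecond (f : ℝ → ℝ → ℝ) : Prop :=
  ContDiffOn ℝ (⊤ : ℕ∞) (fun p : ℝ × ℝ => f p.1 p.2) (Ioo 0 π ×ˢ (univ : Set ℝ)) ∧
  (∀ θ φ : ℝ, f θ (φ + 2 * π) = f θ φ) ∧
  ∃ ε > (0 : ℝ), ∀ θ φ : ℝ, θ < ε ∨ π - ε < θ → f θ φ = 0

/-! ### Auxiliary calculus lemmas -/

namespace Stmt3

/-- the denominator `D = 1 + cos²θ + 2b cosθ`. -/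
def Dq (b θ : ℝ) : ℝ := 1 + Real.cos θ ^ 2 + 2 * b * Real.cos θ

/-- the derivative `u'_{a,b}` of `uab`. -/
def up (b θ : ℝ) : ℝ := -(Real.cos θ / Real.sin θ) - Real.sin θ * (Real.cos θ + b) / Dq b θ

/-- the derivative `v'_{a,b}` of `vab`. -/
def vp (a b θ : ℝ) : ℝ := -(2 * a * (1 - b ^ 2) * Real.sin θ ^ 3) / (Dq b θ) ^ 2

lemma Dq_pos {b : ℝ} (hb1 : -1 < b) (hb2 : b < 1) (θ : ℝ) : 0 < Dq b θ := by
  have h : Dq b θ = (Real.cos θ + b) ^ 2 + (1 - b ^ 2) := by unfold Dq; ring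
  nlinarith [sq_nonneg (Real.cos θ + b)]

lemma hasDerivAt_Dq (b θ : ℝ) :
    HasDerivAt (Dq b) (-(2 * Real.sin θ * (Real.cos θ + b))) θ := by
  have h1 : HasDerivAt (fun t => 1 + Real.cos t ^ 2 + 2 * b * Real.cos t)
      (2 * Real.cos θ * (-Real.sin θ) + 2 * b * (-Real.sin θ)) θ := by
    have hc := Real.hasDerivAt_cos θ
    have := ((hc.pow 2).const_add 1).add (hc.const_mul (2 * b))
    refine this.congr_deriv ?_
    ring
  refine h1.congr_deriv ?_
  ring

lemma hasDerivAt_vab {a b : ℝ} (hb1 : -1 < b) (hb2 : b < 1) (θ : ℝ) :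
    HasDerivAt (vab a b) (vp a b θ) θ := by
  have hD := Dq_pos hb1 hb2 θ
  have hc := Real.hasDerivAt_cos θ
  have hnum : HasDerivAt (fun t => a * (b + b * Real.cos t ^ 2 + 2 * Real.cos t))
      (a * (b * (2 * Real.cos θ * (-Real.sin θ)) + 2 * (-Real.sin θ))) θ := by
    have := (((hc.pow 2).const_mul b).const_add b).add (hc.const_mul 2)
    exact (this.const_mul a).congr_deriv (by ring)
  have h := hnum.div (hasDerivAt_Dq b θ) (ne_of_gt hD)
  have heq : vab a b = fun t => a * (b + b * Real.cos t ^ 2 + 2 * Real.cos t) / Dq b t := by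
    funext t; unfold vab Dq; ring
  rw [heq]
  refine h.congr_deriv ?_
  have hs : Real.sin θ ^ 2 = 1 - Real.cos θ ^ 2 := by
    nlinarith [Real.sin_sq_add_cos_sq θ]
  have h3 : Real.sin θ ^ 3 = Real.sin θ * (1 - Real.cos θ ^ 2) := by rw [← hs]; ring
  have key : -(2 * a * (1 - b ^ 2) * Real.sin θ ^ 3) =
      a * (b * (2 * Real.cos θ * -Real.sin θ) + 2 * -Real.sin θ) * Dq b θ -
        a * (b + b * Real.cos θ ^ 2 + 2 * Real.cos θ) * -(2 * Real.sin θ * (Real.cos θ + b)) := by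
    rw [h3]; unfold Dq; ring
  unfold vp
  rw [key]

end Stmt3

namespace Stmt3

variable {a b : ℝ}

lemma sin_pos_of_mem {θ : ℝ} (hθ : θ ∈ Ioo (0:ℝ) π) : 0 < Real.sin θ :=
  Real.sin_pos_of_pos_of_lt_pi hθ.1 hθ.2

lemma one_sub_sq_pos (hb1 : -1 < b) (hb2 : b < 1) : 0 < 1 - b ^ 2 := by nlinarith

lemma sqrt_pos' (hb1 : -1 < b) (hb2 : b < 1) : 0 < Real.sqrt (1 - b ^ 2) :=
  Real.sqrt_pos.2 (one_sub_sq_pos hb1 hb2)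

lemma hasDerivAt_uab (ha : 0 < a) (hb1 : -1 < b) (hb2 : b < 1) {θ : ℝ}
    (hθ : θ ∈ Ioo (0:ℝ) π) : HasDerivAt (uab a b) (up b θ) θ := by
  have hs := sin_pos_of_mem hθ
  have hD := Dq_pos hb1 hb2 θ
  have hK : 0 < 2 * a * Real.sqrt (1 - b ^ 2) :=
    mul_pos (by linarith) (sqrt_pos' hb1 hb2)
  have h1 : HasDerivAt (fun t => Real.log (Real.sin t)) (Real.cos θ / Real.sin θ) θ := by
    have := (Real.hasDerivAt_sin θ).log (ne_of_gt hs)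
    convert this using 1
  have hQ : HasDerivAt (fun t => 2 * a * Real.sqrt (1 - b ^ 2) / Dq b t)
      ((0 * Dq b θ - 2 * a * Real.sqrt (1 - b ^ 2) * -(2 * Real.sin θ * (Real.cos θ + b))) /
        Dq b θ ^ 2) θ :=
    (hasDerivAt_const θ _).div (hasDerivAt_Dq b θ) (ne_of_gt hD)
  have hQ0 : 2 * a * Real.sqrt (1 - b ^ 2) / Dq b θ ≠ 0 := (div_pos hK hD).ne'
  have h2 := (hQ.log hQ0).const_mul (1/2 : ℝ)
  have h := (h1.neg).sub h2
  have heq : uab a b = fun t => -Real.log (Real.sin t) -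
      (1/2 : ℝ) * Real.log (2 * a * Real.sqrt (1 - b ^ 2) / Dq b t) := by
    funext t; unfold uab Dq; ring_nf
  rw [heq]
  refine h.congr_deriv ?_
  have hsq := sqrt_pos' hb1 hb2
  unfold up
  field_simp [hs.ne', hD.ne', ha.ne', hsq.ne']
  ring

lemma exp2_eq (ha : 0 < a) (hb1 : -1 < b) (hb2 : b < 1) {θ : ℝ} (hθ : θ ∈ Ioo (0:ℝ) π) :
    Real.exp (2 * uab a b θ) =
      Dq b θ / (2 * a * Real.sqrt (1 - b ^ 2) * Real.sin θ ^ 2) := by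
  have hs := sin_pos_of_mem hθ
  have hD := Dq_pos hb1 hb2 θ
  have hK : 0 < 2 * a * Real.sqrt (1 - b ^ 2) :=
    mul_pos (by linarith) (sqrt_pos' hb1 hb2)
  have hlog : Real.log (Dq b θ / (2 * a * Real.sqrt (1 - b ^ 2) * Real.sin θ ^ 2)) =
      2 * uab a b θ := by
    rw [Real.log_div (ne_of_gt hD) (by exact (mul_pos hK (pow_pos hs 2)).ne'),
      Real.log_mul (ne_of_gt hK) (pow_ne_zero 2 hs.ne'), Real.log_pow]
    unfold uab
    rw [Real.log_div (ne_of_gt hK) (by unfold Dq at hD; exact ne_of_gt hD)]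
    unfold Dq
    push_cast
    ring
  rw [← hlog, Real.exp_log (div_pos hD (mul_pos hK (pow_pos hs 2)))]

lemma exp4_eq_sq (a b θ : ℝ) :
    Real.exp (4 * uab a b θ) = Real.exp (2 * uab a b θ) ^ 2 := by
  rw [sq, ← Real.exp_add]; ring_nf

lemma K1 (ha : 0 < a) (hb1 : -1 < b) (hb2 : b < 1) {θ : ℝ} (hθ : θ ∈ Ioo (0:ℝ) π) :
    Real.exp (4 * uab a b θ) * vp a b θ * Real.sin θ = -(1 / (2 * a)) := by
  have hs := sin_pos_of_mem hθ
  have hD := Dq_pos hb1 hb2 θ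
  have hq : Real.sqrt (1 - b ^ 2) ^ 2 = 1 - b ^ 2 :=
    Real.sq_sqrt (le_of_lt (one_sub_sq_pos hb1 hb2))
  have h1 : (0:ℝ) < 1 - b ^ 2 := one_sub_sq_pos hb1 hb2
  rw [exp4_eq_sq, exp2_eq ha hb1 hb2 hθ]
  unfold vp
  rw [div_pow, mul_pow, mul_pow, hq]
  field_simp

lemma exp4_vp_sq (ha : 0 < a) (hb1 : -1 < b) (hb2 : b < 1) {θ : ℝ} (hθ : θ ∈ Ioo (0:ℝ) π) :
    Real.exp (4 * uab a b θ) * vp a b θ ^ 2 =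
      (1 - b ^ 2) * Real.sin θ ^ 2 / Dq b θ ^ 2 := by
  have hs := sin_pos_of_mem hθ
  have hD := Dq_pos hb1 hb2 θ
  have hq : Real.sqrt (1 - b ^ 2) ^ 2 = 1 - b ^ 2 :=
    Real.sq_sqrt (le_of_lt (one_sub_sq_pos hb1 hb2))
  have h1 : (0:ℝ) < 1 - b ^ 2 := one_sub_sq_pos hb1 hb2
  rw [exp4_eq_sq, exp2_eq ha hb1 hb2 hθ]
  unfold vp
  rw [div_pow, div_pow, mul_pow, mul_pow, hq]
  field_simp

lemma K2 (ha : 0 < a) (hb1 : -1 < b) (hb2 : b < 1) {θ : ℝ} (hθ : θ ∈ Ioo (0:ℝ) π) :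
    HasDerivAt (fun t => up b t * Real.sin t)
      (2 * Real.exp (4 * uab a b θ) * vp a b θ ^ 2 * Real.sin θ) θ := by
  have hs := sin_pos_of_mem hθ
  have hD := Dq_pos hb1 hb2 θ
  have hnum : HasDerivAt (fun t => Real.sin t ^ 2 * (Real.cos t + b))
      ((2 * Real.sin θ * Real.cos θ) * (Real.cos θ + b) + Real.sin θ ^ 2 * -Real.sin θ) θ := by
    have h := (((Real.hasDerivAt_sin θ).pow 2).mul ((Real.hasDerivAt_cos θ).add_const b))
    refine h.congr_deriv ?_
    simp only [Pi.pow_apply]; ring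
  have hg : HasDerivAt (fun t => -Real.cos t - Real.sin t ^ 2 * (Real.cos t + b) / Dq b t)
      (Real.sin θ -
        (((2 * Real.sin θ * Real.cos θ) * (Real.cos θ + b) + Real.sin θ ^ 2 * -Real.sin θ) *
            Dq b θ - Real.sin θ ^ 2 * (Real.cos θ + b) * -(2 * Real.sin θ * (Real.cos θ + b))) /
          Dq b θ ^ 2) θ := by
    have h1 := (Real.hasDerivAt_cos θ).neg
    have h2 := hnum.div (hasDerivAt_Dq b θ) (ne_of_gt hD)
    have := h1.sub h2
    refine this.congr_deriv ?_
    ring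
  have heq : (fun t => up b t * Real.sin t) =ᶠ[nhds θ]
      (fun t => -Real.cos t - Real.sin t ^ 2 * (Real.cos t + b) / Dq b t) := by
    filter_upwards [isOpen_Ioo.eventually_mem hθ] with t ht
    have hst := sin_pos_of_mem ht
    have hDt := Dq_pos hb1 hb2 t
    unfold up
    field_simp
  have hmain := hg.congr_of_eventuallyEq heq
  refine hmain.congr_deriv ?_; symm
  rw [show 2 * Real.exp (4 * uab a b θ) * vp a b θ ^ 2 * Real.sin θ =
    2 * (Real.exp (4 * uab a b θ) * vp a b θ ^ 2) * Real.sin θ by ring,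
    exp4_vp_sq ha hb1 hb2 hθ]
  have hs2 : Real.sin θ ^ 2 = 1 - Real.cos θ ^ 2 := by
    nlinarith [Real.sin_sq_add_cos_sq θ]
  have hD2 : (Dq b θ ^ 2 : ℝ) ≠ 0 := by positivity
  rw [show Real.sin θ -
      ((2 * Real.sin θ * Real.cos θ * (Real.cos θ + b) + Real.sin θ ^ 2 * -Real.sin θ) *
          Dq b θ - Real.sin θ ^ 2 * (Real.cos θ + b) * -(2 * Real.sin θ * (Real.cos θ + b))) /
        Dq b θ ^ 2 =
      (Real.sin θ * Dq b θ ^ 2 -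
        ((2 * Real.sin θ * Real.cos θ * (Real.cos θ + b) + Real.sin θ ^ 2 * -Real.sin θ) *
          Dq b θ - Real.sin θ ^ 2 * (Real.cos θ + b) * -(2 * Real.sin θ * (Real.cos θ + b)))) /
        Dq b θ ^ 2 by field_simp,
    show 2 * ((1 - b ^ 2) * Real.sin θ ^ 2 / Dq b θ ^ 2) * Real.sin θ =
      (2 * (1 - b ^ 2) * Real.sin θ ^ 2 * Real.sin θ) / Dq b θ ^ 2 by ring,
    div_eq_div_iff hD2 hD2]
  unfold Dq
  linear_combination (Real.sin θ * (1 + Real.cos θ ^ 2 + 2 * b * Real.cos θ) ^ 3) * hs2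

end Stmt3

namespace Stmt3

/-- The coordinate strip. -/
def strip : Set (ℝ × ℝ) := Ioo (0:ℝ) π ×ˢ (univ : Set ℝ)

lemma strip_isOpen : IsOpen strip := isOpen_Ioo.prod isOpen_univ

lemma mem_strip {θ : ℝ} (hθ : θ ∈ Ioo (0:ℝ) π) (φ : ℝ) : (θ, φ) ∈ strip :=
  ⟨hθ, mem_univ _⟩

lemma hasDerivAt_secθ {f : ℝ → ℝ → ℝ}
    (hf : ContDiffOn ℝ 1 (fun p : ℝ × ℝ => f p.1 p.2) strip)
    {θ : ℝ} (hθ : θ ∈ Ioo (0:ℝ) π) (φ : ℝ) :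
    HasDerivAt (fun x => f x φ) (pdθ f θ φ) θ := by
  have hd : DifferentiableAt ℝ (fun p : ℝ × ℝ => f p.1 p.2) (θ, φ) :=
    (hf.differentiableOn one_ne_zero).differentiableAt (strip_isOpen.mem_nhds (mem_strip hθ φ))
  have h1 : HasDerivAt (fun t : ℝ => ((t, φ) : ℝ × ℝ)) ((1:ℝ), (0:ℝ)) θ :=
    (hasDerivAt_id θ).prodMk (hasDerivAt_const θ φ)
  have h2 : HasDerivAt (fun x => f x φ) (fderiv ℝ (fun p : ℝ × ℝ => f p.1 p.2) (θ, φ) (1, 0)) θ :=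
    hd.hasFDerivAt.comp_hasDerivAt (f := fun t : ℝ => ((t, φ) : ℝ × ℝ)) θ h1
  exact h2.differentiableAt.hasDerivAt

lemma hasDerivAt_secφ {f : ℝ → ℝ → ℝ}
    (hf : ContDiffOn ℝ 1 (fun p : ℝ × ℝ => f p.1 p.2) strip)
    {θ : ℝ} (hθ : θ ∈ Ioo (0:ℝ) π) (φ : ℝ) :
    HasDerivAt (fun y => f θ y) (pdφ f θ φ) φ := by
  have hd : DifferentiableAt ℝ (fun p : ℝ × ℝ => f p.1 p.2) (θ, φ) :=
    (hf.differentiableOn one_ne_zero).differentiableAt (strip_isOpen.mem_nhds (mem_strip hθ φ))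
  have h1 : HasDerivAt (fun t : ℝ => ((θ, t) : ℝ × ℝ)) ((0:ℝ), (1:ℝ)) φ :=
    (hasDerivAt_const φ θ).prodMk (hasDerivAt_id φ)
  have h2 : HasDerivAt (fun y => f θ y) (fderiv ℝ (fun p : ℝ × ℝ => f p.1 p.2) (θ, φ) (0, 1)) φ :=
    hd.hasFDerivAt.comp_hasDerivAt φ h1
  exact h2.differentiableAt.hasDerivAt

lemma contOn_pdθ {f : ℝ → ℝ → ℝ}
    (hf : ContDiffOn ℝ 1 (fun p : ℝ × ℝ => f p.1 p.2) strip) :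
    ContinuousOn (fun p : ℝ × ℝ => pdθ f p.1 p.2) strip := by
  have hfd := hf.continuousOn_fderiv_of_isOpen strip_isOpen le_rfl
  have h := hfd.clm_apply (continuousOn_const (c := ((1:ℝ), (0:ℝ))))
  refine h.congr fun p hp => ?_
  have h2 : HasDerivAt (fun x => f x p.2)
      (fderiv ℝ (fun p : ℝ × ℝ => f p.1 p.2) p (1, 0)) p.1 := by
    have hd : DifferentiableAt ℝ (fun p : ℝ × ℝ => f p.1 p.2) p :=
      (hf.differentiableOn one_ne_zero).differentiableAt (strip_isOpen.mem_nhds hp)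
    exact hd.hasFDerivAt.comp_hasDerivAt p.1 ((hasDerivAt_id p.1).prodMk (hasDerivAt_const p.1 p.2))
  exact h2.deriv

lemma contOn_pdφ {f : ℝ → ℝ → ℝ}
    (hf : ContDiffOn ℝ 1 (fun p : ℝ × ℝ => f p.1 p.2) strip) :
    ContinuousOn (fun p : ℝ × ℝ => pdφ f p.1 p.2) strip := by
  have hfd := hf.continuousOn_fderiv_of_isOpen strip_isOpen le_rfl
  have h := hfd.clm_apply (continuousOn_const (c := ((0:ℝ), (1:ℝ))))
  refine h.congr fun p hp => ?_
  have h2 : HasDerivAt (fun y => f p.1 y)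
      (fderiv ℝ (fun p : ℝ × ℝ => f p.1 p.2) p (0, 1)) p.2 := by
    have hd : DifferentiableAt ℝ (fun p : ℝ × ℝ => f p.1 p.2) p :=
      (hf.differentiableOn one_ne_zero).differentiableAt (strip_isOpen.mem_nhds hp)
    exact hd.hasFDerivAt.comp_hasDerivAt p.2 ((hasDerivAt_const p.2 p.1).prodMk (hasDerivAt_id p.2))
  exact h2.deriv

lemma cont_secφ {g : ℝ → ℝ → ℝ}
    (hg : ContinuousOn (fun p : ℝ × ℝ => g p.1 p.2) strip)
    {θ : ℝ} (hθ : θ ∈ Ioo (0:ℝ) π) : Continuous (fun φ => g θ φ) := by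
  rw [← continuousOn_univ]
  exact hg.comp (Continuous.continuousOn (by fun_prop)) (fun x _ => mem_strip hθ x)

lemma contOn_secθ {g : ℝ → ℝ → ℝ}
    (hg : ContinuousOn (fun p : ℝ × ℝ => g p.1 p.2) strip) (φ : ℝ) :
    ContinuousOn (fun t => g t φ) (Ioo (0:ℝ) π) :=
  hg.comp (Continuous.continuousOn (by fun_prop)) (fun t ht => mem_strip ht φ)

lemma pdθ_periodic {f : ℝ → ℝ → ℝ} (hper : ∀ θ φ, f θ (φ + 2 * π) = f θ φ)
    (θ φ : ℝ) : pdθ f θ (φ + 2 * π) = pdθ f θ φ := by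
  unfold pdθ; congr 1; funext x; exact hper x φ

lemma pdφ_periodic {f : ℝ → ℝ → ℝ} (hper : ∀ θ φ, f θ (φ + 2 * π) = f θ φ)
    (θ φ : ℝ) : pdφ f θ (φ + 2 * π) = pdφ f θ φ := by
  unfold pdφ
  have h : deriv (fun y => f θ y) (φ + 2 * π) = deriv (fun y => f θ (y + 2 * π)) φ := by
    rw [deriv_comp_add_const]
  rw [h]
  congr 1
  funext y
  exact hper θ y

/-- boundedness of a continuous, `φ`-periodic function supported in
`Icc ε (π - ε)` in the `θ` variable. -/
lemma bounded_of_periodic_support {g : ℝ → ℝ → ℝ}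
    (hc : ContinuousOn (fun p : ℝ × ℝ => g p.1 p.2) strip)
    (hper : ∀ θ φ, g θ (φ + 2 * π) = g θ φ) {ε : ℝ} (hε1 : 0 < ε) (hε2 : ε ≤ π / 4)
    (hsupp : ∀ θ φ, θ ∉ Icc ε (π - ε) → g θ φ = 0) :
    ∃ M : ℝ, 0 ≤ M ∧ ∀ θ ∈ Ioo (0:ℝ) π, ∀ φ : ℝ, |g θ φ| ≤ M := by
  have hπ := Real.pi_pos
  have hKsub : (Icc ε (π - ε) ×ˢ Icc (0:ℝ) (2 * π)) ⊆ strip := by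
    rintro ⟨x, y⟩ ⟨hx, _⟩
    exact ⟨⟨lt_of_lt_of_le hε1 hx.1, lt_of_le_of_lt hx.2 (by linarith)⟩, mem_univ _⟩
  obtain ⟨C, hC⟩ := (isCompact_Icc.prod isCompact_Icc).exists_bound_of_continuousOn
    (hc.mono hKsub)
  refine ⟨max C 0, le_max_right _ _, fun θ hθ φ => ?_⟩
  by_cases hmem : θ ∈ Icc ε (π - ε)
  · have hperi : Function.Periodic (g θ) (2 * π) := fun x => hper θ x
    obtain ⟨y, hy, hval⟩ := hperi.exists_mem_Ico₀ Real.two_pi_pos φ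
    rw [hval]
    have := hC (θ, y) ⟨hmem, ⟨hy.1, le_of_lt hy.2⟩⟩
    rw [Real.norm_eq_abs] at this
    exact this.trans (le_max_left _ _)
  · rw [hsupp θ φ hmem]
    simp [le_max_right]

end Stmt3

namespace Stmt3

lemma covNorm_zero (f : ℝ → ℝ → ℝ) (θ φ : ℝ) : covNorm 0 f θ φ = |f θ φ| := by
  unfold covNorm
  rw [show ∑ I : Fin 0 → Fin 2, (∏ j, sphWeight (I j) θ) * (covIter f 0 I θ φ) ^ 2
      = f θ φ ^ 2 by simp [covIter]]
  exact Real.sqrt_sq_eq_abs _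

lemma covIter_one (f : ℝ → ℝ → ℝ) (I : Fin 1 → Fin 2) (θ φ : ℝ) :
    covIter f 1 I θ φ = pder2 (I 0) f θ φ := by
  show covDer (covIter f 0) I θ φ = _
  unfold covDer
  simp [covIter]

lemma covNorm_one (f : ℝ → ℝ → ℝ) (θ φ : ℝ) :
    covNorm 1 f θ φ =
      Real.sqrt (pdθ f θ φ ^ 2 + (Real.sin θ ^ 2)⁻¹ * pdφ f θ φ ^ 2) := by
  unfold covNorm
  congr 1
  rw [← (Equiv.funUnique (Fin 1) (Fin 2)).symm.sum_comp]
  rw [Fin.sum_univ_two]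
  simp only [covIter_one]
  simp [Equiv.funUnique, pder2, sphWeight]

/-- bounds from a `C¹` admissible first component. -/
lemma adm_first_bounds {f : ℝ → ℝ → ℝ} (hf : AdmFirst f) :
    ∃ C : ℝ, 0 ≤ C ∧ ∀ θ ∈ Ioo (0:ℝ) π, ∀ φ : ℝ,
      |f θ φ| ≤ C ∧ |pdθ f θ φ| ≤ C ∧ |pdφ f θ φ| ≤ C * Real.sin θ := by
  obtain ⟨-, -, C, hC⟩ := hf
  have hπ := Real.pi_pos
  have hhalf : (π/2 : ℝ) ∈ Ioo (0:ℝ) π := ⟨by linarith, by linarith⟩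
  have hC0 : 0 ≤ C := le_trans (Real.sqrt_nonneg _) (hC 0 (by norm_num) (π/2) hhalf 0)
  refine ⟨C, hC0, fun θ hθ φ => ?_⟩
  have hs := Real.sin_pos_of_pos_of_lt_pi hθ.1 hθ.2
  have h0 := hC 0 (by norm_num) θ hθ φ
  rw [covNorm_zero] at h0
  have h1 := hC 1 le_rfl θ hθ φ
  rw [covNorm_one] at h1
  have hsum : pdθ f θ φ ^ 2 + (Real.sin θ ^ 2)⁻¹ * pdφ f θ φ ^ 2 ≤ C ^ 2 := by
    have := Real.sqrt_le_sqrt (le_of_eq (Real.sqrt_sq hC0).symm)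
    nlinarith [Real.sq_sqrt (show (0:ℝ) ≤ pdθ f θ φ ^ 2 + (Real.sin θ ^ 2)⁻¹ * pdφ f θ φ ^ 2
      by positivity), h1, Real.sqrt_nonneg (pdθ f θ φ ^ 2 + (Real.sin θ ^ 2)⁻¹ * pdφ f θ φ ^ 2)]
  have hw : (0:ℝ) < (Real.sin θ ^ 2)⁻¹ := by positivity
  have key : ∀ x C' : ℝ, 0 ≤ C' → x ^ 2 ≤ C' ^ 2 → |x| ≤ C' := by
    intro x C' hC' h
    nlinarith [sq_abs x, abs_nonneg x]
  refine ⟨h0, ?_, ?_⟩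
  · refine key _ _ hC0 ?_
    nlinarith [sq_nonneg (pdφ f θ φ)]
  · refine key _ _ (by positivity) ?_
    have hs2 : (0:ℝ) < Real.sin θ ^ 2 := by positivity
    have hmul := mul_le_mul_of_nonneg_right hsum hs2.le
    have h3 : (Real.sin θ ^ 2)⁻¹ * pdφ f θ φ ^ 2 * Real.sin θ ^ 2 = pdφ f θ φ ^ 2 := by
      field_simp
    have h4 : 0 ≤ pdθ f θ φ ^ 2 * Real.sin θ ^ 2 :=
      mul_nonneg (sq_nonneg _) hs2.le
    have h2 : pdφ f θ φ ^ 2 ≤ C ^ 2 * Real.sin θ ^ 2 := by nlinarith [hmul, h3, h4]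
    calc pdφ f θ φ ^ 2 ≤ C ^ 2 * Real.sin θ ^ 2 := h2
      _ = (C * Real.sin θ) ^ 2 := by ring

end Stmt3

namespace Stmt3

variable {a b : ℝ}

/-- normalized support data for an admissible second component. -/
lemma adm_second_support {f : ℝ → ℝ → ℝ} (hf : AdmSecond f) :
    ∃ ε : ℝ, 0 < ε ∧ ε ≤ π / 4 ∧ ∀ θ φ : ℝ, (θ ≤ ε ∨ π - ε ≤ θ) →
      f θ φ = 0 ∧ pdθ f θ φ = 0 ∧ pdφ f θ φ = 0 := by
  obtain ⟨-, -, ε₀, hε₀, hsupp⟩ := hf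
  have hπ := Real.pi_pos
  set ε := min (ε₀ / 2) (π / 4) with hεdef
  have hεε₀ : ε < ε₀ := lt_of_le_of_lt (min_le_left _ _) (by linarith)
  refine ⟨ε, lt_min (by linarith) (by linarith), min_le_right _ _, fun θ φ hcase => ?_⟩
  rcases hcase with hcase | hcase
  · have hall : ∀ x, x < ε₀ → ∀ ψ, f x ψ = 0 := fun x hx ψ => hsupp x ψ (Or.inl hx)
    have hθ0 : θ < ε₀ := lt_of_le_of_lt hcase hεε₀
    refine ⟨hall θ hθ0 φ, ?_, ?_⟩
    · have hev : (fun x => f x φ) =ᶠ[nhds θ] (fun _ => (0:ℝ)) := by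
        filter_upwards [Iio_mem_nhds hθ0] with x hx
        exact hall x hx φ
      unfold pdθ
      rw [hev.deriv_eq]
      simp
    · have hfn : (fun y => f θ y) = (fun _ => (0:ℝ)) := funext fun y => hall θ hθ0 y
      unfold pdφ
      rw [hfn]
      simp
  · have hall : ∀ x, π - ε₀ < x → ∀ ψ, f x ψ = 0 := fun x hx ψ => hsupp x ψ (Or.inr hx)
    have hθ0 : π - ε₀ < θ := by
      have : π - ε₀ < π - ε := by linarith
      linarith
    refine ⟨hall θ hθ0 φ, ?_, ?_⟩
    · have hev : (fun x => f x φ) =ᶠ[nhds θ] (fun _ => (0:ℝ)) := by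
        filter_upwards [Ioi_mem_nhds hθ0] with x hx
        exact hall x hx φ
      unfold pdθ
      rw [hev.deriv_eq]
      simp
    · have hfn : (fun y => f θ y) = (fun _ => (0:ℝ)) := funext fun y => hall θ hθ0 y
      unfold pdφ
      rw [hfn]
      simp

lemma pdθ_vab (hb1 : -1 < b) (hb2 : b < 1) (θ φ : ℝ) :
    pdθ (fun θ' (_ : ℝ) => vab a b θ') θ φ = vp a b θ :=
  (hasDerivAt_vab hb1 hb2 θ).deriv

lemma pdφ_vab (θ φ : ℝ) : pdφ (fun θ' (_ : ℝ) => vab a b θ') θ φ = 0 := by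
  unfold pdφ
  simp

lemma Dq_ge (b θ : ℝ) : 1 - b ^ 2 ≤ Dq b θ := by
  have h : Dq b θ = (Real.cos θ + b) ^ 2 + (1 - b ^ 2) := by unfold Dq; ring
  nlinarith [sq_nonneg (Real.cos θ + b)]

lemma continuous_Dq (b : ℝ) : Continuous (Dq b) := by unfold Dq; fun_prop

lemma vp_bound (ha : 0 < a) (hb1 : -1 < b) (hb2 : b < 1) (θ : ℝ) :
    |vp a b θ| ≤ 2 * a / (1 - b ^ 2) := by
  have h1 := one_sub_sq_pos hb1 hb2
  have hD := Dq_pos hb1 hb2 θ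
  have hDge := Dq_ge b θ
  have hs3 : |Real.sin θ ^ 3| ≤ 1 := by
    rw [abs_pow]
    exact pow_le_one₀ (abs_nonneg _) (Real.abs_sin_le_one θ)
  unfold vp
  rw [abs_div, abs_neg]
  have h2 : |Dq b θ ^ 2| = Dq b θ ^ 2 := abs_of_pos (by positivity)
  calc |2 * a * (1 - b ^ 2) * Real.sin θ ^ 3| / |Dq b θ ^ 2|
      ≤ (2 * a * (1 - b ^ 2)) / ((1 - b ^ 2) ^ 2) := by
        apply div_le_div₀ (by positivity) ?_ (by positivity) ?_
        · rw [abs_mul, abs_of_pos (by positivity : (0:ℝ) < 2 * a * (1 - b ^ 2))]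
          exact mul_le_of_le_one_right (by positivity) hs3
        · rw [h2]
          nlinarith [mul_le_mul hDge hDge (le_of_lt h1) (le_of_lt hD)]
    _ = 2 * a / (1 - b ^ 2) := by
        field_simp

lemma exp4_vp_sq_bound (ha : 0 < a) (hb1 : -1 < b) (hb2 : b < 1) {θ : ℝ}
    (hθ : θ ∈ Ioo (0:ℝ) π) :
    Real.exp (4 * uab a b θ) * vp a b θ ^ 2 ≤ 1 / (1 - b ^ 2) := by
  have h1 := one_sub_sq_pos hb1 hb2
  have hD := Dq_pos hb1 hb2 θ
  have hDge := Dq_ge b θ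
  rw [exp4_vp_sq ha hb1 hb2 hθ]
  rw [div_le_div_iff₀ (by positivity) h1]
  have hs2 : Real.sin θ ^ 2 ≤ 1 := Real.sin_sq_le_one θ
  nlinarith [mul_le_mul hDge hDge (le_of_lt h1) (le_of_lt hD), hs2, h1,
    mul_pos h1 h1]

lemma continuous_vp (hb1 : -1 < b) (hb2 : b < 1) : Continuous (vp a b) := by
  unfold vp
  apply Continuous.div (by fun_prop) (by exact (continuous_Dq b).pow 2)
  intro x
  exact pow_ne_zero 2 (Dq_pos hb1 hb2 x).ne'

lemma contOn_up (hb1 : -1 < b) (hb2 : b < 1) :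
    ContinuousOn (up b) (Ioo (0:ℝ) π) := by
  unfold up
  apply ContinuousOn.sub
  · apply ContinuousOn.neg
    exact ContinuousOn.div (by fun_prop) (by fun_prop)
      (fun x hx => (sin_pos_of_mem hx).ne')
  · exact ContinuousOn.div (by fun_prop) ((continuous_Dq b).continuousOn)
      (fun x _ => (Dq_pos hb1 hb2 x).ne')

lemma contOn_uab (ha : 0 < a) (hb1 : -1 < b) (hb2 : b < 1) :
    ContinuousOn (uab a b) (Ioo (0:ℝ) π) := fun θ hθ =>
  ((hasDerivAt_uab ha hb1 hb2 hθ).continuousAt).continuousWithinAt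

lemma contOn_E4 (ha : 0 < a) (hb1 : -1 < b) (hb2 : b < 1) :
    ContinuousOn (fun θ => Real.exp (4 * uab a b θ)) (Ioo (0:ℝ) π) :=
  (Real.continuous_exp.comp_continuousOn ((contOn_uab ha hb1 hb2).const_smul (4:ℝ)))

lemma hasDerivAt_E4 (ha : 0 < a) (hb1 : -1 < b) (hb2 : b < 1) {θ : ℝ}
    (hθ : θ ∈ Ioo (0:ℝ) π) :
    HasDerivAt (fun t => Real.exp (4 * uab a b t))
      (4 * up b θ * Real.exp (4 * uab a b θ)) θ := by
  have h := ((hasDerivAt_uab ha hb1 hb2 hθ).const_mul 4).exp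
  convert h using 1
  ring

/-- The master algebraic (sum-of-squares) identity. -/
lemma sos_identity (s A At Af B Bt Bf u' v' e2 : ℝ) (hs : s ≠ 0) :
    (At * At + (s ^ 2)⁻¹ * Af * Af
      + e2 ^ 2 * (Bt * Bt + (s ^ 2)⁻¹ * Bf * Bf)
      + 8 * e2 ^ 2 * v' ^ 2 * A * A
      + 4 * e2 ^ 2 * A * (v' * Bt)
      - 4 * e2 ^ 2 * B * (v' * At)) * s
    + (4 * (e2 ^ 2) ^ 2 * v' ^ 2 * s * B ^ 2 + 8 * u' ^ 2 * s * e2 ^ 2 * B ^ 2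
       + 4 * u' * s * e2 ^ 2 * B * Bt)
    = s * (At - 2 * (e2 * v' * s) * e2 * B / s) ^ 2
      + s * (e2 * (Bt + 2 * u' * B) + 2 * (e2 * v' * s) * A / s) ^ 2
      + 4 * ((e2 * v' * s) * A - u' * s * e2 * B) ^ 2 / s
      + Af ^ 2 / s + (e2 * Bf) ^ 2 / s := by
  field_simp
  ring

end Stmt3

namespace Stmt3

lemma ball_subset_Ioo {θ₀ : ℝ} (hθ₀ : θ₀ ∈ Ioo (0:ℝ) π) :
    Metric.ball θ₀ (min θ₀ (π - θ₀)) ⊆ Ioo (0:ℝ) π := by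
  intro x hx
  rw [Metric.mem_ball, Real.dist_eq] at hx
  have h1 : |x - θ₀| < θ₀ := lt_of_lt_of_le hx (min_le_left _ _)
  have h2 : |x - θ₀| < π - θ₀ := lt_of_lt_of_le hx (min_le_right _ _)
  rw [abs_lt] at h1 h2
  exact ⟨by linarith [h1.1], by linarith [h2.2]⟩

lemma inner_integrableOn {F : ℝ → ℝ → ℝ}
    (hc : ContinuousOn (fun p : ℝ × ℝ => F p.1 p.2) strip)
    {θ : ℝ} (hθ : θ ∈ Ioo (0:ℝ) π) :
    IntegrableOn (fun φ => F θ φ) (Ioo (0:ℝ) (2 * π)) :=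
  ((cont_secφ hc hθ).integrableOn_Icc).mono_set Ioo_subset_Icc_self

lemma const_integrableOn (c : ℝ) (x y : ℝ) :
    IntegrableOn (fun _ : ℝ => c) (Ioo x y) := by
  rw [integrableOn_const_iff]
  exact Or.inr measure_Ioo_lt_top

lemma contOn_inner {F : ℝ → ℝ → ℝ}
    (hc : ContinuousOn (fun p : ℝ × ℝ => F p.1 p.2) strip)
    {M : ℝ} (hM : ∀ θ ∈ Ioo (0:ℝ) π, ∀ φ : ℝ, |F θ φ| ≤ M) :
    ContinuousOn (fun θ => ∫ φ in Ioo (0:ℝ) (2 * π), F θ φ) (Ioo (0:ℝ) π) := by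
  apply continuousOn_of_dominated (bound := fun _ => M)
  · exact fun θ hθ => (cont_secφ hc hθ).aestronglyMeasurable
  · exact fun θ hθ => Eventually.of_forall fun φ => by
      rw [Real.norm_eq_abs]; exact hM θ hθ φ
  · exact const_integrableOn M 0 (2 * π)
  · exact Eventually.of_forall fun φ => contOn_secθ hc φ

set_option maxHeartbeats 1000000 in
lemma outer_integrableOn {F : ℝ → ℝ → ℝ}
    (hc : ContinuousOn (fun p : ℝ × ℝ => F p.1 p.2) strip)
    {M : ℝ} (hM0 : 0 ≤ M) (hM : ∀ θ ∈ Ioo (0:ℝ) π, ∀ φ : ℝ, |F θ φ| ≤ M) :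
    IntegrableOn (fun θ => (∫ φ in Ioo (0:ℝ) (2 * π), F θ φ) * Real.sin θ)
      (Ioo (0:ℝ) π) := by
  have hπ := Real.pi_pos
  have hcont := (contOn_inner hc hM).mul Real.continuous_sin.continuousOn
  refine ⟨hcont.aestronglyMeasurable measurableSet_Ioo,
    HasFiniteIntegral.restrict_of_bounded (C := M * (2 * π)) measure_Ioo_lt_top ?_⟩
  rw [ae_restrict_iff' measurableSet_Ioo]
  apply Eventually.of_forall
  intro θ hθ
  rw [Real.norm_eq_abs, abs_mul]
  have h1 : |∫ φ in Ioo (0:ℝ) (2 * π), F θ φ| ≤ M * (2 * π) := by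
    have := norm_integral_le_of_norm_le_const (μ := volume.restrict (Ioo (0:ℝ) (2*π)))
      (f := fun φ => F θ φ) (C := M)
      (Eventually.of_forall fun φ => by rw [Real.norm_eq_abs]; exact hM θ hθ φ)
    rw [Real.norm_eq_abs] at this
    calc |∫ φ in Ioo (0:ℝ) (2 * π), F θ φ|
        ≤ M * (volume.restrict (Ioo (0:ℝ) (2*π)) univ).toReal := this
      _ = M * (2 * π) := by
          rw [Measure.restrict_apply_univ, Real.volume_Ioo]
          rw [ENNReal.toReal_ofReal (by linarith)]
          ring_nf
  calc |∫ φ in Ioo (0:ℝ) (2 * π), F θ φ| * |Real.sin θ|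
      ≤ (M * (2 * π)) * 1 := by
        apply mul_le_mul h1 (Real.abs_sin_le_one θ) (abs_nonneg _) (by positivity)
    _ = M * (2 * π) := by ring

set_option maxHeartbeats 1000000 in
/-- differentiation under the `φ`-integral. -/
lemma hasDerivAt_param {g gd : ℝ → ℝ → ℝ}
    (hgc : ContinuousOn (fun p : ℝ × ℝ => g p.1 p.2) strip)
    (hgdc : ContinuousOn (fun p : ℝ × ℝ => gd p.1 p.2) strip)
    {M : ℝ} (hM : ∀ θ ∈ Ioo (0:ℝ) π, ∀ φ : ℝ, |gd θ φ| ≤ M)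
    (hder : ∀ θ ∈ Ioo (0:ℝ) π, ∀ φ : ℝ, HasDerivAt (fun t => g t φ) (gd θ φ) θ)
    {θ₀ : ℝ} (hθ₀ : θ₀ ∈ Ioo (0:ℝ) π) :
    HasDerivAt (fun t => ∫ φ in Ioo (0:ℝ) (2 * π), g t φ)
      (∫ φ in Ioo (0:ℝ) (2 * π), gd θ₀ φ) θ₀ := by
  have hrpos : 0 < min θ₀ (π - θ₀) := lt_min hθ₀.1 (by linarith [hθ₀.2])
  have hball := ball_subset_Ioo hθ₀
  refine (hasDerivAt_integral_of_dominated_loc_of_deriv_le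
    (μ := volume.restrict (Ioo (0:ℝ) (2 * π))) (F := fun t φ => g t φ)
    (F' := fun t φ => gd t φ) (bound := fun _ => M) (Metric.ball_mem_nhds θ₀ hrpos) ?_ ?_ ?_ ?_ ?_ ?_).2
  · filter_upwards [isOpen_Ioo.eventually_mem hθ₀] with t ht
    exact (cont_secφ hgc ht).aestronglyMeasurable
  · exact inner_integrableOn hgc hθ₀
  · exact (cont_secφ hgdc hθ₀).aestronglyMeasurable
  · exact Eventually.of_forall fun φ t ht => by
      rw [Real.norm_eq_abs]; exact hM t (hball ht) φ
  · exact const_integrableOn M 0 (2 * π)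
  · exact Eventually.of_forall fun φ t ht => hder t (hball ht) φ

/-- FTC on a subinterval, for an integrand vanishing off `Icc ε (π - ε)`. -/
lemma integral_eq_zero_of_antideriv {h W : ℝ → ℝ} {ε : ℝ}
    (hε1 : 0 < ε) (hε2 : ε ≤ π / 4)
    (hint : IntegrableOn h (Ioo (0:ℝ) π))
    (hzero : ∀ θ ∈ Ioo (0:ℝ) π, θ ∉ Icc ε (π - ε) → h θ = 0)
    (hW : ∀ θ ∈ Icc ε (π - ε), HasDerivAt W (h θ) θ)
    (hWε : W ε = 0) (hWε' : W (π - ε) = 0) :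
    ∫ θ in Ioo (0:ℝ) π, h θ = 0 := by
  have hπ := Real.pi_pos
  have hle : ε ≤ π - ε := by linarith
  have hsub : Icc ε (π - ε) ⊆ Ioo (0:ℝ) π := fun x hx =>
    ⟨lt_of_lt_of_le hε1 hx.1, lt_of_le_of_lt hx.2 (by linarith)⟩
  have h1 : ∫ θ in Ioo (0:ℝ) π, h θ = ∫ θ in Icc ε (π - ε), h θ := by
    rw [show (Icc ε (π - ε)) = Ioo (0:ℝ) π ∩ Icc ε (π - ε) by
      rw [inter_eq_self_of_subset_right hsub]]
    rw [← setIntegral_indicator measurableSet_Icc]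
    apply setIntegral_congr_fun measurableSet_Ioo
    intro θ hθ
    by_cases hm : θ ∈ Icc ε (π - ε)
    · rw [indicator_of_mem hm]
    · rw [indicator_of_notMem hm, hzero θ hθ hm]
  have h2 : IntervalIntegrable h volume ε (π - ε) := by
    rw [intervalIntegrable_iff_integrableOn_Ioc_of_le hle]
    exact hint.mono_set (fun x hx => hsub ⟨le_of_lt hx.1, hx.2⟩)
  have h3 : ∫ θ in ε..(π - ε), h θ = W (π - ε) - W ε := by
    apply intervalIntegral.integral_eq_sub_of_hasDerivAt ?_ h2
    intro x hx
    rw [uIcc_of_le hle] at hx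
    exact hW x hx
  rw [h1, integral_Icc_eq_integral_Ioc, ← intervalIntegral.integral_of_le hle, h3,
    hWε, hWε']
  ring

end Stmt3

namespace Stmt3

/-- the integrand of the bilinear form. -/
def BI (a b : ℝ) (f1 f2 p1 p2 : ℝ → ℝ → ℝ) : ℝ → ℝ → ℝ := fun θ φ =>
  gradDotS2 f1 p1 θ φ
    + Real.exp (4 * uab a b θ) * gradDotS2 f2 p2 θ φ
    + 8 * Real.exp (4 * uab a b θ) *
        gradNormSqS2 (fun θ' _ => vab a b θ') θ φ * f1 θ φ * p1 θ φ
    + 4 * Real.exp (4 * uab a b θ) * p1 θ φ *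
        gradDotS2 (fun θ' _ => vab a b θ') f2 θ φ
    - 4 * Real.exp (4 * uab a b θ) * p2 θ φ *
        gradDotS2 (fun θ' _ => vab a b θ') f1 θ φ

lemma Bform_eq_sphInt (a b : ℝ) (f1 f2 p1 p2 : ℝ → ℝ → ℝ) :
    Bform a b f1 f2 p1 p2 = sphInt (BI a b f1 f2 p1 p2) := rfl

/-- the boundary-term generator `H`. -/
def Hfun (a b : ℝ) (f2 : ℝ → ℝ → ℝ) : ℝ → ℝ → ℝ := fun θ φ =>
  2 * (up b θ * Real.sin θ * Real.exp (4 * uab a b θ) * f2 θ φ ^ 2)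

/-- the `θ`-derivative of `H`. -/
def Hd (a b : ℝ) (f2 : ℝ → ℝ → ℝ) : ℝ → ℝ → ℝ := fun θ φ =>
  4 * Real.exp (4 * uab a b θ) ^ 2 * vp a b θ ^ 2 * Real.sin θ * f2 θ φ ^ 2
    + 8 * up b θ ^ 2 * Real.sin θ * Real.exp (4 * uab a b θ) * f2 θ φ ^ 2
    + 4 * up b θ * Real.sin θ * Real.exp (4 * uab a b θ) * f2 θ φ * pdθ f2 θ φ

/-- the antisymmetric combination `w`. -/
def wfun (f1 f2 p1 p2 : ℝ → ℝ → ℝ) : ℝ → ℝ → ℝ := fun θ φ =>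
  p1 θ φ * f2 θ φ - f1 θ φ * p2 θ φ

/-- the `θ`-derivative of `w`. -/
def wd (f1 f2 p1 p2 : ℝ → ℝ → ℝ) : ℝ → ℝ → ℝ := fun θ φ =>
  p1 θ φ * pdθ f2 θ φ + f2 θ φ * pdθ p1 θ φ
    - f1 θ φ * pdθ p2 θ φ - p2 θ φ * pdθ f1 θ φ

variable {a b : ℝ} {f1 f2 p1 p2 : ℝ → ℝ → ℝ}

lemma BI_eval (hb1 : -1 < b) (hb2 : b < 1) (θ φ : ℝ) :
    BI a b f1 f2 p1 p2 θ φ =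
      pdθ f1 θ φ * pdθ p1 θ φ + (Real.sin θ ^ 2)⁻¹ * pdφ f1 θ φ * pdφ p1 θ φ
      + Real.exp (4 * uab a b θ) *
          (pdθ f2 θ φ * pdθ p2 θ φ + (Real.sin θ ^ 2)⁻¹ * pdφ f2 θ φ * pdφ p2 θ φ)
      + 8 * Real.exp (4 * uab a b θ) * vp a b θ ^ 2 * (f1 θ φ * p1 θ φ)
      + 4 * Real.exp (4 * uab a b θ) * p1 θ φ * (vp a b θ * pdθ f2 θ φ)
      - 4 * Real.exp (4 * uab a b θ) * p2 θ φ * (vp a b θ * pdθ f1 θ φ) := by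
  unfold BI gradNormSqS2 gradDotS2
  rw [pdθ_vab hb1 hb2, pdφ_vab]
  ring

lemma BI_sub_eval (hb1 : -1 < b) (hb2 : b < 1) (θ φ : ℝ) :
    BI a b f1 f2 p1 p2 θ φ - BI a b p1 p2 f1 f2 θ φ =
      4 * Real.exp (4 * uab a b θ) * vp a b θ * wd f1 f2 p1 p2 θ φ := by
  rw [BI_eval hb1 hb2, BI_eval hb1 hb2]
  unfold wd
  ring

lemma hasDerivAt_wfun
    (hf1cd : ContDiffOn ℝ 1 (fun p : ℝ × ℝ => f1 p.1 p.2) strip)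
    (hf2cd : ContDiffOn ℝ 1 (fun p : ℝ × ℝ => f2 p.1 p.2) strip)
    (hp1cd : ContDiffOn ℝ 1 (fun p : ℝ × ℝ => p1 p.1 p.2) strip)
    (hp2cd : ContDiffOn ℝ 1 (fun p : ℝ × ℝ => p2 p.1 p.2) strip)
    {θ : ℝ} (hθ : θ ∈ Ioo (0:ℝ) π) (φ : ℝ) :
    HasDerivAt (fun t => wfun f1 f2 p1 p2 t φ) (wd f1 f2 p1 p2 θ φ) θ := by
  have h := ((hasDerivAt_secθ hp1cd hθ φ).mul (hasDerivAt_secθ hf2cd hθ φ)).sub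
    ((hasDerivAt_secθ hf1cd hθ φ).mul (hasDerivAt_secθ hp2cd hθ φ))
  refine h.congr_deriv ?_
  unfold wd
  ring

lemma hasDerivAt_Hfun (ha : 0 < a) (hb1 : -1 < b) (hb2 : b < 1)
    (hf2cd : ContDiffOn ℝ 1 (fun p : ℝ × ℝ => f2 p.1 p.2) strip)
    {θ : ℝ} (hθ : θ ∈ Ioo (0:ℝ) π) (φ : ℝ) :
    HasDerivAt (fun t => Hfun a b f2 t φ) (Hd a b f2 θ φ) θ := by
  have h1 := K2 ha hb1 hb2 hθ
  have h2 := hasDerivAt_E4 ha hb1 hb2 hθ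
  have h3 := hasDerivAt_secθ hf2cd hθ φ
  have h := (((h1.mul h2).mul (h3.pow 2)).const_mul (2:ℝ))
  refine h.congr_deriv ?_
  unfold Hd
  push_cast
  simp only [Pi.pow_apply, Pi.mul_apply]; ring

/-- the key pointwise nonnegativity, via the sum-of-squares identity. -/
lemma key_nonneg (ha : 0 < a) (hb1 : -1 < b) (hb2 : b < 1)
    {θ : ℝ} (hθ : θ ∈ Ioo (0:ℝ) π) (φ : ℝ) :
    0 ≤ BI a b f1 f2 f1 f2 θ φ * Real.sin θ + Hd a b f2 θ φ := by
  have hs := sin_pos_of_mem hθ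
  set s := Real.sin θ with hsdef
  set A := f1 θ φ
  set At := pdθ f1 θ φ
  set Af := pdφ f1 θ φ
  set B := f2 θ φ
  set Bt := pdθ f2 θ φ
  set Bf := pdφ f2 θ φ
  set u' := up b θ
  set v' := vp a b θ
  set e2 := Real.exp (2 * uab a b θ) with he2def
  have he2 : Real.exp (4 * uab a b θ) = e2 ^ 2 := exp4_eq_sq a b θ
  have hsos := sos_identity s A At Af B Bt Bf u' v' e2 hs.ne'
  have hX : BI a b f1 f2 f1 f2 θ φ * s + Hd a b f2 θ φ
      = s * (At - 2 * (e2 * v' * s) * e2 * B / s) ^ 2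
        + s * (e2 * (Bt + 2 * u' * B) + 2 * (e2 * v' * s) * A / s) ^ 2
        + 4 * ((e2 * v' * s) * A - u' * s * e2 * B) ^ 2 / s
        + Af ^ 2 / s + (e2 * Bf) ^ 2 / s := by
    rw [BI_eval hb1 hb2]
    unfold Hd
    rw [he2]
    linear_combination hsos
  rw [hX]
  have h1 : 0 ≤ s * (At - 2 * (e2 * v' * s) * e2 * B / s) ^ 2 :=
    mul_nonneg hs.le (sq_nonneg _)
  have h2 : 0 ≤ s * (e2 * (Bt + 2 * u' * B) + 2 * (e2 * v' * s) * A / s) ^ 2 :=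
    mul_nonneg hs.le (sq_nonneg _)
  have h3 : 0 ≤ 4 * ((e2 * v' * s) * A - u' * s * e2 * B) ^ 2 / s :=
    div_nonneg (by positivity) hs.le
  have h4 : 0 ≤ Af ^ 2 / s := div_nonneg (sq_nonneg _) hs.le
  have h5 : 0 ≤ (e2 * Bf) ^ 2 / s := div_nonneg (sq_nonneg _) hs.le
  linarith

end Stmt3

namespace Stmt3

variable {a b : ℝ} {f1 f2 p1 p2 : ℝ → ℝ → ℝ}

lemma contOn_sin2inv :
    ContinuousOn (fun p : ℝ × ℝ => (Real.sin p.1 ^ 2)⁻¹) strip := by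
  have hsin : ContinuousOn (fun p : ℝ × ℝ => Real.sin p.1) strip := by fun_prop
  exact (hsin.pow 2).inv₀ (fun p hp => pow_ne_zero 2 (sin_pos_of_mem hp.1).ne')

lemma contOn_E4' (ha : 0 < a) (hb1 : -1 < b) (hb2 : b < 1) :
    ContinuousOn (fun p : ℝ × ℝ => Real.exp (4 * uab a b p.1)) strip :=
  (contOn_E4 ha hb1 hb2).comp continuous_fst.continuousOn (fun _ hp => hp.1)

lemma contOn_vp' (hb1 : -1 < b) (hb2 : b < 1) :
    ContinuousOn (fun p : ℝ × ℝ => vp a b p.1) strip :=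
  ((continuous_vp hb1 hb2).comp continuous_fst).continuousOn

lemma contOn_up' (hb1 : -1 < b) (hb2 : b < 1) :
    ContinuousOn (fun p : ℝ × ℝ => up b p.1) strip :=
  (contOn_up hb1 hb2).comp continuous_fst.continuousOn (fun _ hp => hp.1)

lemma contOn_BI (ha : 0 < a) (hb1 : -1 < b) (hb2 : b < 1)
    (hf1cd : ContDiffOn ℝ 1 (fun p : ℝ × ℝ => f1 p.1 p.2) strip)
    (hf2cd : ContDiffOn ℝ 1 (fun p : ℝ × ℝ => f2 p.1 p.2) strip)
    (hp1cd : ContDiffOn ℝ 1 (fun p : ℝ × ℝ => p1 p.1 p.2) strip)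
    (hp2cd : ContDiffOn ℝ 1 (fun p : ℝ × ℝ => p2 p.1 p.2) strip) :
    ContinuousOn (fun p : ℝ × ℝ => BI a b f1 f2 p1 p2 p.1 p.2) strip := by
  have a1 := contOn_pdθ hf1cd; have a2 := contOn_pdφ hf1cd
  have b1 := contOn_pdθ hf2cd; have b2 := contOn_pdφ hf2cd
  have c1 := contOn_pdθ hp1cd; have c2 := contOn_pdφ hp1cd
  have d1 := contOn_pdθ hp2cd; have d2 := contOn_pdφ hp2cd
  have e1 := hf1cd.continuousOn; have e2 := hf2cd.continuousOn
  have e3 := hp1cd.continuousOn; have e4 := hp2cd.continuousOn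
  have g1 := contOn_sin2inv; have g2 := contOn_E4' ha hb1 hb2
  have g3 := contOn_vp' (a := a) hb1 hb2
  have hNF : ContinuousOn (fun p : ℝ × ℝ =>
      pdθ f1 p.1 p.2 * pdθ p1 p.1 p.2
        + (Real.sin p.1 ^ 2)⁻¹ * pdφ f1 p.1 p.2 * pdφ p1 p.1 p.2
      + Real.exp (4 * uab a b p.1) *
          (pdθ f2 p.1 p.2 * pdθ p2 p.1 p.2
            + (Real.sin p.1 ^ 2)⁻¹ * pdφ f2 p.1 p.2 * pdφ p2 p.1 p.2)
      + 8 * Real.exp (4 * uab a b p.1) * vp a b p.1 ^ 2 * (f1 p.1 p.2 * p1 p.1 p.2)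
      + 4 * Real.exp (4 * uab a b p.1) * p1 p.1 p.2 * (vp a b p.1 * pdθ f2 p.1 p.2)
      - 4 * Real.exp (4 * uab a b p.1) * p2 p.1 p.2 * (vp a b p.1 * pdθ f1 p.1 p.2))
      strip := by fun_prop
  exact hNF.congr (fun p _ => BI_eval hb1 hb2 p.1 p.2)

lemma contOn_Hd (ha : 0 < a) (hb1 : -1 < b) (hb2 : b < 1)
    (hf2cd : ContDiffOn ℝ 1 (fun p : ℝ × ℝ => f2 p.1 p.2) strip) :
    ContinuousOn (fun p : ℝ × ℝ => Hd a b f2 p.1 p.2) strip := by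
  have b1 := contOn_pdθ hf2cd
  have e2 := hf2cd.continuousOn
  have g2 := contOn_E4' ha hb1 hb2
  have g3 := contOn_vp' (a := a) hb1 hb2
  have g4 := contOn_up' (b := b) hb1 hb2
  unfold Hd
  fun_prop

lemma contOn_Hfun (ha : 0 < a) (hb1 : -1 < b) (hb2 : b < 1)
    (hf2cd : ContDiffOn ℝ 1 (fun p : ℝ × ℝ => f2 p.1 p.2) strip) :
    ContinuousOn (fun p : ℝ × ℝ => Hfun a b f2 p.1 p.2) strip := by
  have e2 := hf2cd.continuousOn
  have g2 := contOn_E4' ha hb1 hb2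
  have g4 := contOn_up' (b := b) hb1 hb2
  unfold Hfun
  fun_prop

lemma contOn_wfun
    (hf1cd : ContDiffOn ℝ 1 (fun p : ℝ × ℝ => f1 p.1 p.2) strip)
    (hf2cd : ContDiffOn ℝ 1 (fun p : ℝ × ℝ => f2 p.1 p.2) strip)
    (hp1cd : ContDiffOn ℝ 1 (fun p : ℝ × ℝ => p1 p.1 p.2) strip)
    (hp2cd : ContDiffOn ℝ 1 (fun p : ℝ × ℝ => p2 p.1 p.2) strip) :
    ContinuousOn (fun p : ℝ × ℝ => wfun f1 f2 p1 p2 p.1 p.2) strip := by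
  have e1 := hf1cd.continuousOn; have e2 := hf2cd.continuousOn
  have e3 := hp1cd.continuousOn; have e4 := hp2cd.continuousOn
  unfold wfun
  fun_prop

lemma contOn_wd
    (hf1cd : ContDiffOn ℝ 1 (fun p : ℝ × ℝ => f1 p.1 p.2) strip)
    (hf2cd : ContDiffOn ℝ 1 (fun p : ℝ × ℝ => f2 p.1 p.2) strip)
    (hp1cd : ContDiffOn ℝ 1 (fun p : ℝ × ℝ => p1 p.1 p.2) strip)
    (hp2cd : ContDiffOn ℝ 1 (fun p : ℝ × ℝ => p2 p.1 p.2) strip) :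
    ContinuousOn (fun p : ℝ × ℝ => wd f1 f2 p1 p2 p.1 p.2) strip := by
  have a1 := contOn_pdθ hf1cd; have b1 := contOn_pdθ hf2cd
  have c1 := contOn_pdθ hp1cd; have d1 := contOn_pdθ hp2cd
  have e1 := hf1cd.continuousOn; have e2 := hf2cd.continuousOn
  have e3 := hp1cd.continuousOn; have e4 := hp2cd.continuousOn
  unfold wd
  fun_prop

lemma Hd_periodic (hf2per : ∀ θ φ, f2 θ (φ + 2 * π) = f2 θ φ) (θ φ : ℝ) :
    Hd a b f2 θ (φ + 2 * π) = Hd a b f2 θ φ := by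
  unfold Hd
  rw [hf2per, pdθ_periodic hf2per]

lemma Hfun_periodic (hf2per : ∀ θ φ, f2 θ (φ + 2 * π) = f2 θ φ) (θ φ : ℝ) :
    Hfun a b f2 θ (φ + 2 * π) = Hfun a b f2 θ φ := by
  unfold Hfun
  rw [hf2per]

lemma wd_periodic (h1 : ∀ θ φ, f1 θ (φ + 2 * π) = f1 θ φ)
    (h2 : ∀ θ φ, f2 θ (φ + 2 * π) = f2 θ φ)
    (h3 : ∀ θ φ, p1 θ (φ + 2 * π) = p1 θ φ)
    (h4 : ∀ θ φ, p2 θ (φ + 2 * π) = p2 θ φ) (θ φ : ℝ) :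
    wd f1 f2 p1 p2 θ (φ + 2 * π) = wd f1 f2 p1 p2 θ φ := by
  unfold wd
  rw [h1, h2, h3, h4, pdθ_periodic h1, pdθ_periodic h2, pdθ_periodic h3, pdθ_periodic h4]

lemma Hd_supp {ε : ℝ}
    (hz : ∀ θ φ, (θ ≤ ε ∨ π - ε ≤ θ) → f2 θ φ = 0 ∧ pdθ f2 θ φ = 0 ∧ pdφ f2 θ φ = 0)
    (θ φ : ℝ) (hθ : θ ≤ ε ∨ π - ε ≤ θ) : Hd a b f2 θ φ = 0 := by
  obtain ⟨z1, z2, -⟩ := hz θ φ hθ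
  unfold Hd
  rw [z1, z2]
  ring

lemma Hfun_supp {ε : ℝ}
    (hz : ∀ θ φ, (θ ≤ ε ∨ π - ε ≤ θ) → f2 θ φ = 0 ∧ pdθ f2 θ φ = 0 ∧ pdφ f2 θ φ = 0)
    (θ φ : ℝ) (hθ : θ ≤ ε ∨ π - ε ≤ θ) : Hfun a b f2 θ φ = 0 := by
  obtain ⟨z1, -, -⟩ := hz θ φ hθ
  unfold Hfun
  rw [z1]
  ring

lemma wfun_supp {ε : ℝ}
    (hz2 : ∀ θ φ, (θ ≤ ε ∨ π - ε ≤ θ) → f2 θ φ = 0 ∧ pdθ f2 θ φ = 0 ∧ pdφ f2 θ φ = 0)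
    (hz4 : ∀ θ φ, (θ ≤ ε ∨ π - ε ≤ θ) → p2 θ φ = 0 ∧ pdθ p2 θ φ = 0 ∧ pdφ p2 θ φ = 0)
    (θ φ : ℝ) (hθ : θ ≤ ε ∨ π - ε ≤ θ) : wfun f1 f2 p1 p2 θ φ = 0 := by
  obtain ⟨z1, -, -⟩ := hz2 θ φ hθ
  obtain ⟨z2, -, -⟩ := hz4 θ φ hθ
  unfold wfun
  rw [z1, z2]
  ring

lemma wd_supp {ε : ℝ}
    (hz2 : ∀ θ φ, (θ ≤ ε ∨ π - ε ≤ θ) → f2 θ φ = 0 ∧ pdθ f2 θ φ = 0 ∧ pdφ f2 θ φ = 0)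
    (hz4 : ∀ θ φ, (θ ≤ ε ∨ π - ε ≤ θ) → p2 θ φ = 0 ∧ pdθ p2 θ φ = 0 ∧ pdφ p2 θ φ = 0)
    (θ φ : ℝ) (hθ : θ ≤ ε ∨ π - ε ≤ θ) : wd f1 f2 p1 p2 θ φ = 0 := by
  obtain ⟨z1, z2, -⟩ := hz2 θ φ hθ
  obtain ⟨z3, z4, -⟩ := hz4 θ φ hθ
  unfold wd
  rw [z1, z2, z3, z4]
  ring

end Stmt3

namespace Stmt3

variable {a b : ℝ} {f1 f2 p1 p2 : ℝ → ℝ → ℝ}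

/-- the part of the integrand carrying second components. -/
def BI2 (a b : ℝ) (f1 f2 p1 p2 : ℝ → ℝ → ℝ) : ℝ → ℝ → ℝ := fun θ φ =>
  Real.exp (4 * uab a b θ) *
      (pdθ f2 θ φ * pdθ p2 θ φ + (Real.sin θ ^ 2)⁻¹ * pdφ f2 θ φ * pdφ p2 θ φ)
    + 4 * Real.exp (4 * uab a b θ) * p1 θ φ * (vp a b θ * pdθ f2 θ φ)
    - 4 * Real.exp (4 * uab a b θ) * p2 θ φ * (vp a b θ * pdθ f1 θ φ)

lemma BI_as_sum (hb1 : -1 < b) (hb2 : b < 1) (θ φ : ℝ) :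
    BI a b f1 f2 p1 p2 θ φ =
      (pdθ f1 θ φ * pdθ p1 θ φ + (Real.sin θ ^ 2)⁻¹ * pdφ f1 θ φ * pdφ p1 θ φ
        + 8 * Real.exp (4 * uab a b θ) * vp a b θ ^ 2 * (f1 θ φ * p1 θ φ))
      + BI2 a b f1 f2 p1 p2 θ φ := by
  rw [BI_eval hb1 hb2]
  unfold BI2
  ring

lemma contOn_BI2 (ha : 0 < a) (hb1 : -1 < b) (hb2 : b < 1)
    (hf1cd : ContDiffOn ℝ 1 (fun p : ℝ × ℝ => f1 p.1 p.2) strip)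
    (hf2cd : ContDiffOn ℝ 1 (fun p : ℝ × ℝ => f2 p.1 p.2) strip)
    (hp1cd : ContDiffOn ℝ 1 (fun p : ℝ × ℝ => p1 p.1 p.2) strip)
    (hp2cd : ContDiffOn ℝ 1 (fun p : ℝ × ℝ => p2 p.1 p.2) strip) :
    ContinuousOn (fun p : ℝ × ℝ => BI2 a b f1 f2 p1 p2 p.1 p.2) strip := by
  have a1 := contOn_pdθ hf1cd
  have b1 := contOn_pdθ hf2cd; have b2 := contOn_pdφ hf2cd
  have d1 := contOn_pdθ hp2cd; have d2 := contOn_pdφ hp2cd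
  have e3 := hp1cd.continuousOn; have e4 := hp2cd.continuousOn
  have g1 := contOn_sin2inv; have g2 := contOn_E4' ha hb1 hb2
  have g3 := contOn_vp' (a := a) hb1 hb2
  unfold BI2
  fun_prop

lemma BI2_periodic (h1 : ∀ θ φ, f1 θ (φ + 2 * π) = f1 θ φ)
    (h2 : ∀ θ φ, f2 θ (φ + 2 * π) = f2 θ φ)
    (h3 : ∀ θ φ, p1 θ (φ + 2 * π) = p1 θ φ)
    (h4 : ∀ θ φ, p2 θ (φ + 2 * π) = p2 θ φ) (θ φ : ℝ) :
    BI2 a b f1 f2 p1 p2 θ (φ + 2 * π) = BI2 a b f1 f2 p1 p2 θ φ := by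
  unfold BI2
  rw [h3, h4, pdθ_periodic h1, pdθ_periodic h2, pdθ_periodic h4,
    pdφ_periodic h2, pdφ_periodic h4]

lemma BI2_supp {ε : ℝ}
    (hz2 : ∀ θ φ, (θ ≤ ε ∨ π - ε ≤ θ) → f2 θ φ = 0 ∧ pdθ f2 θ φ = 0 ∧ pdφ f2 θ φ = 0)
    (hz4 : ∀ θ φ, (θ ≤ ε ∨ π - ε ≤ θ) → p2 θ φ = 0 ∧ pdθ p2 θ φ = 0 ∧ pdφ p2 θ φ = 0)
    (θ φ : ℝ) (hθ : θ ≤ ε ∨ π - ε ≤ θ) : BI2 a b f1 f2 p1 p2 θ φ = 0 := by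
  obtain ⟨-, z2, z3⟩ := hz2 θ φ hθ
  obtain ⟨z4, -, -⟩ := hz4 θ φ hθ
  unfold BI2
  rw [z2, z3, z4]
  ring

/-- global bound on the integrand. -/
lemma BI_bound (ha : 0 < a) (hb1 : -1 < b) (hb2 : b < 1)
    (hf1 : AdmFirst f1) (hp1 : AdmFirst p1) (hf2 : AdmSecond f2) (hp2 : AdmSecond p2) :
    ∃ M : ℝ, 0 ≤ M ∧ ∀ θ ∈ Ioo (0:ℝ) π, ∀ φ : ℝ, |BI a b f1 f2 p1 p2 θ φ| ≤ M := by
  have hf1cd : ContDiffOn ℝ 1 (fun p : ℝ × ℝ => f1 p.1 p.2) strip := by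
    exact_mod_cast hf1.1
  have hp1cd : ContDiffOn ℝ 1 (fun p : ℝ × ℝ => p1 p.1 p.2) strip := by
    exact_mod_cast hp1.1
  have hf2cd : ContDiffOn ℝ 1 (fun p : ℝ × ℝ => f2 p.1 p.2) strip := hf2.1.of_le (by simp)
  have hp2cd : ContDiffOn ℝ 1 (fun p : ℝ × ℝ => p2 p.1 p.2) strip := hp2.1.of_le (by simp)
  obtain ⟨C1, hC10, hC1⟩ := adm_first_bounds hf1
  obtain ⟨C2, hC20, hC2⟩ := adm_first_bounds hp1
  obtain ⟨ε2, hε2p, hε2le, hs2⟩ := adm_second_support hf2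
  obtain ⟨ε3, hε3p, hε3le, hs3⟩ := adm_second_support hp2
  set ε := min ε2 ε3 with hεdef
  have hεp : 0 < ε := lt_min hε2p hε3p
  have hεle : ε ≤ π / 4 := le_trans (min_le_left _ _) hε2le
  have hz2 : ∀ θ φ, (θ ≤ ε ∨ π - ε ≤ θ) →
      f2 θ φ = 0 ∧ pdθ f2 θ φ = 0 ∧ pdφ f2 θ φ = 0 := by
    intro θ φ hθ
    apply hs2 θ φ
    rcases hθ with h | h
    · exact Or.inl (le_trans h (min_le_left _ _))
    · exact Or.inr (le_trans (by linarith [min_le_left ε2 ε3]) h)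
  have hz4 : ∀ θ φ, (θ ≤ ε ∨ π - ε ≤ θ) →
      p2 θ φ = 0 ∧ pdθ p2 θ φ = 0 ∧ pdφ p2 θ φ = 0 := by
    intro θ φ hθ
    apply hs3 θ φ
    rcases hθ with h | h
    · exact Or.inl (le_trans h (min_le_right _ _))
    · exact Or.inr (le_trans (by linarith [min_le_right ε2 ε3]) h)
  obtain ⟨M2, hM20, hM2⟩ := bounded_of_periodic_support
    (contOn_BI2 ha hb1 hb2 hf1cd hf2cd hp1cd hp2cd)
    (BI2_periodic hf1.2.1 hf2.2.1 hp1.2.1 hp2.2.1) hεp hεle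
    (fun θ φ hθ => BI2_supp hz2 hz4 θ φ (by
      rw [mem_Icc] at hθ
      push_neg at hθ
      by_cases h : ε ≤ θ
      · exact Or.inr (le_of_lt (hθ h))
      · exact Or.inl (le_of_lt (lt_of_not_ge h))))
  have h1b := one_sub_sq_pos hb1 hb2
  refine ⟨2 * (C1 * C2) + 8 * ((1 / (1 - b ^ 2)) * (C1 * C2)) + M2, by positivity,
    fun θ hθ φ => ?_⟩
  have hs := sin_pos_of_mem hθ
  obtain ⟨hA, hAt, hAf⟩ := hC1 θ hθ φ
  obtain ⟨hA', hAt', hAf'⟩ := hC2 θ hθ φ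
  have hE4vp : 0 ≤ Real.exp (4 * uab a b θ) * vp a b θ ^ 2 := by positivity
  have hE4vpb := exp4_vp_sq_bound ha hb1 hb2 hθ
  rw [BI_as_sum hb1 hb2]
  have t1 : |pdθ f1 θ φ * pdθ p1 θ φ| ≤ C1 * C2 := by
    rw [abs_mul]
    exact mul_le_mul hAt hAt' (abs_nonneg _) hC10
  have t2 : |(Real.sin θ ^ 2)⁻¹ * pdφ f1 θ φ * pdφ p1 θ φ| ≤ C1 * C2 := by
    rw [abs_mul, abs_mul, abs_of_pos (show (0:ℝ) < (Real.sin θ ^ 2)⁻¹ by positivity)]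
    have step : (Real.sin θ ^ 2)⁻¹ * |pdφ f1 θ φ| * |pdφ p1 θ φ| ≤
        (Real.sin θ ^ 2)⁻¹ * (C1 * Real.sin θ) * (C2 * Real.sin θ) := by
      apply mul_le_mul _ hAf' (abs_nonneg _) (by positivity)
      exact mul_le_mul_of_nonneg_left hAf (by positivity)
    calc (Real.sin θ ^ 2)⁻¹ * |pdφ f1 θ φ| * |pdφ p1 θ φ|
        ≤ (Real.sin θ ^ 2)⁻¹ * (C1 * Real.sin θ) * (C2 * Real.sin θ) := step
      _ = C1 * C2 := by field_simp
  have t3 : |8 * Real.exp (4 * uab a b θ) * vp a b θ ^ 2 * (f1 θ φ * p1 θ φ)| ≤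
      8 * ((1 / (1 - b ^ 2)) * (C1 * C2)) := by
    rw [abs_mul, abs_of_nonneg (show (0:ℝ) ≤ 8 * Real.exp (4 * uab a b θ) * vp a b θ ^ 2
      by positivity)]
    have hAB : |f1 θ φ * p1 θ φ| ≤ C1 * C2 := by
      rw [abs_mul]; exact mul_le_mul hA hA' (abs_nonneg _) hC10
    have hcoef : 8 * Real.exp (4 * uab a b θ) * vp a b θ ^ 2 ≤ 8 * (1 / (1 - b ^ 2)) := by
      rw [mul_assoc]
      exact mul_le_mul_of_nonneg_left hE4vpb (by norm_num)
    calc 8 * Real.exp (4 * uab a b θ) * vp a b θ ^ 2 * |f1 θ φ * p1 θ φ|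
        ≤ 8 * (1 / (1 - b ^ 2)) * (C1 * C2) :=
          mul_le_mul hcoef hAB (abs_nonneg _) (by positivity)
      _ = 8 * ((1 / (1 - b ^ 2)) * (C1 * C2)) := by ring
  have tB := hM2 θ hθ φ
  calc |pdθ f1 θ φ * pdθ p1 θ φ + (Real.sin θ ^ 2)⁻¹ * pdφ f1 θ φ * pdφ p1 θ φ
        + 8 * Real.exp (4 * uab a b θ) * vp a b θ ^ 2 * (f1 θ φ * p1 θ φ)
        + BI2 a b f1 f2 p1 p2 θ φ|
      ≤ |pdθ f1 θ φ * pdθ p1 θ φ| + |(Real.sin θ ^ 2)⁻¹ * pdφ f1 θ φ * pdφ p1 θ φ|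
        + |8 * Real.exp (4 * uab a b θ) * vp a b θ ^ 2 * (f1 θ φ * p1 θ φ)|
        + |BI2 a b f1 f2 p1 p2 θ φ| := by
        exact (abs_add_le _ _).trans (by
          gcongr
          exact (abs_add_le _ _).trans (by
            gcongr
            exact abs_add_le _ _))
    _ ≤ 2 * (C1 * C2) + 8 * ((1 / (1 - b ^ 2)) * (C1 * C2)) + M2 := by linarith

/-- integrability of the inner integral (without the `sin` factor). -/
lemma mid_integrableOn {F : ℝ → ℝ → ℝ}
    (hc : ContinuousOn (fun p : ℝ × ℝ => F p.1 p.2) strip)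
    {M : ℝ} (hM0 : 0 ≤ M) (hM : ∀ θ ∈ Ioo (0:ℝ) π, ∀ φ : ℝ, |F θ φ| ≤ M) :
    IntegrableOn (fun θ => ∫ φ in Ioo (0:ℝ) (2 * π), F θ φ) (Ioo (0:ℝ) π) := by
  have hπ := Real.pi_pos
  have hcont := contOn_inner hc hM
  refine ⟨hcont.aestronglyMeasurable measurableSet_Ioo,
    HasFiniteIntegral.restrict_of_bounded (C := M * (2 * π)) measure_Ioo_lt_top ?_⟩
  rw [ae_restrict_iff' measurableSet_Ioo]
  apply Eventually.of_forall
  intro θ hθ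
  have := norm_integral_le_of_norm_le_const (μ := volume.restrict (Ioo (0:ℝ) (2*π)))
    (f := fun φ => F θ φ) (C := M)
    (Eventually.of_forall fun φ => by rw [Real.norm_eq_abs]; exact hM θ hθ φ)
  calc ‖∫ φ in Ioo (0:ℝ) (2 * π), F θ φ‖
      ≤ M * (volume.restrict (Ioo (0:ℝ) (2*π)) univ).toReal := this
    _ = M * (2 * π) := by
        rw [Measure.restrict_apply_univ, Real.volume_Ioo]
        rw [ENNReal.toReal_ofReal (by linarith)]
        ring_nf

end Stmt3

namespace Stmt3

lemma notIcc {ε θ : ℝ} (h : θ ∉ Icc ε (π - ε)) : θ ≤ ε ∨ π - ε ≤ θ := by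
  rw [mem_Icc] at h
  push_neg at h
  by_cases hc : ε ≤ θ
  · exact Or.inr (h hc).le
  · exact Or.inl (not_le.1 hc).le

end Stmt3

open Stmt3 in
theorem statement_3'
    (a b : ℝ) (ha : 0 < a) (hb : b ∈ Ioo (-1 : ℝ) 1)
    (f1 f2 p1 p2 : ℝ → ℝ → ℝ)
    (hf1 : AdmFirst f1) (hp1 : AdmFirst p1)
    (hf2 : AdmSecond f2) (hp2 : AdmSecond p2) :
    Bform a b f1 f2 p1 p2 = Bform a b p1 p2 f1 f2 ∧
    0 ≤ Bform a b f1 f2 f1 f2 := by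
  obtain ⟨hb1, hb2⟩ := hb
  have hπ := Real.pi_pos
  have hf1cd : ContDiffOn ℝ 1 (fun p : ℝ × ℝ => f1 p.1 p.2) strip := by
    exact_mod_cast hf1.1
  have hp1cd : ContDiffOn ℝ 1 (fun p : ℝ × ℝ => p1 p.1 p.2) strip := by
    exact_mod_cast hp1.1
  have hf2cd : ContDiffOn ℝ 1 (fun p : ℝ × ℝ => f2 p.1 p.2) strip := hf2.1.of_le (by simp)
  have hp2cd : ContDiffOn ℝ 1 (fun p : ℝ × ℝ => p2 p.1 p.2) strip := hp2.1.of_le (by simp)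
  obtain ⟨ε2, hε2p, hε2le, hs2⟩ := adm_second_support hf2
  obtain ⟨ε3, hε3p, hε3le, hs3⟩ := adm_second_support hp2
  constructor
  · -- symmetry
    set ε := min ε2 ε3 with hεdef
    have hεp : 0 < ε := lt_min hε2p hε3p
    have hεle : ε ≤ π / 4 := le_trans (min_le_left _ _) hε2le
    have hz2 : ∀ θ φ, (θ ≤ ε ∨ π - ε ≤ θ) →
        f2 θ φ = 0 ∧ pdθ f2 θ φ = 0 ∧ pdφ f2 θ φ = 0 := by
      intro θ φ hθ
      apply hs2 θ φ
      rcases hθ with h | h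
      · exact Or.inl (le_trans h (min_le_left _ _))
      · exact Or.inr (le_trans (by linarith [min_le_left ε2 ε3]) h)
    have hz4 : ∀ θ φ, (θ ≤ ε ∨ π - ε ≤ θ) →
        p2 θ φ = 0 ∧ pdθ p2 θ φ = 0 ∧ pdφ p2 θ φ = 0 := by
      intro θ φ hθ
      apply hs3 θ φ
      rcases hθ with h | h
      · exact Or.inl (le_trans h (min_le_right _ _))
      · exact Or.inr (le_trans (by linarith [min_le_right ε2 ε3]) h)
    obtain ⟨Mfp, hMfp0, hMfp⟩ := BI_bound ha hb1 hb2 hf1 hp1 hf2 hp2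
    obtain ⟨Mpf, hMpf0, hMpf⟩ := BI_bound ha hb1 hb2 hp1 hf1 hp2 hf2
    have hcfp := contOn_BI ha hb1 hb2 hf1cd hf2cd hp1cd hp2cd
    have hcpf := contOn_BI ha hb1 hb2 hp1cd hp2cd hf1cd hf2cd
    have hOfp := outer_integrableOn hcfp hMfp0 hMfp
    have hOpf := outer_integrableOn hcpf hMpf0 hMpf
    have hcw := contOn_wfun hf1cd hf2cd hp1cd hp2cd
    have hcwd := contOn_wd hf1cd hf2cd hp1cd hp2cd
    obtain ⟨Mwd, hMwd0, hMwd⟩ := bounded_of_periodic_support hcwd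
      (wd_periodic hf1.2.1 hf2.2.1 hp1.2.1 hp2.2.1) hεp hεle
      (fun θ φ hθ => wd_supp hz2 hz4 θ φ (notIcc hθ))
    -- the pointwise identity for the difference of outer integrands
    have hident : ∀ θ ∈ Ioo (0:ℝ) π,
        (∫ φ in Ioo (0:ℝ) (2 * π), BI a b f1 f2 p1 p2 θ φ) * Real.sin θ
          - (∫ φ in Ioo (0:ℝ) (2 * π), BI a b p1 p2 f1 f2 θ φ) * Real.sin θ
        = (-(2 / a)) * ∫ φ in Ioo (0:ℝ) (2 * π), wd f1 f2 p1 p2 θ φ := by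
      intro θ hθ
      have e1 := inner_integrableOn hcfp hθ
      have e2 := inner_integrableOn hcpf hθ
      have step1 : (∫ φ in Ioo (0:ℝ) (2 * π), BI a b f1 f2 p1 p2 θ φ)
          - (∫ φ in Ioo (0:ℝ) (2 * π), BI a b p1 p2 f1 f2 θ φ)
          = ∫ φ in Ioo (0:ℝ) (2 * π),
              (BI a b f1 f2 p1 p2 θ φ - BI a b p1 p2 f1 f2 θ φ) :=
        (integral_sub e1 e2).symm
      have step2 : (fun φ => BI a b f1 f2 p1 p2 θ φ - BI a b p1 p2 f1 f2 θ φ)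
          = fun φ => 4 * Real.exp (4 * uab a b θ) * vp a b θ * wd f1 f2 p1 p2 θ φ :=
        funext fun φ => BI_sub_eval hb1 hb2 θ φ
      have hk : 4 * Real.exp (4 * uab a b θ) * vp a b θ * Real.sin θ = -(2 / a) := by
        have hK := K1 ha hb1 hb2 hθ
        linear_combination 4 * hK
      calc (∫ φ in Ioo (0:ℝ) (2 * π), BI a b f1 f2 p1 p2 θ φ) * Real.sin θ
            - (∫ φ in Ioo (0:ℝ) (2 * π), BI a b p1 p2 f1 f2 θ φ) * Real.sin θ
          = ((∫ φ in Ioo (0:ℝ) (2 * π), BI a b f1 f2 p1 p2 θ φ)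
              - (∫ φ in Ioo (0:ℝ) (2 * π), BI a b p1 p2 f1 f2 θ φ)) * Real.sin θ := by
            ring
        _ = (∫ φ in Ioo (0:ℝ) (2 * π),
              (4 * Real.exp (4 * uab a b θ) * vp a b θ) * wd f1 f2 p1 p2 θ φ) *
              Real.sin θ := by
            rw [step1, step2]
        _ = ((4 * Real.exp (4 * uab a b θ) * vp a b θ) *
              ∫ φ in Ioo (0:ℝ) (2 * π), wd f1 f2 p1 p2 θ φ) * Real.sin θ := by
            rw [integral_const_mul]
        _ = (4 * Real.exp (4 * uab a b θ) * vp a b θ * Real.sin θ) *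
              ∫ φ in Ioo (0:ℝ) (2 * π), wd f1 f2 p1 p2 θ φ := by ring
        _ = (-(2 / a)) * ∫ φ in Ioo (0:ℝ) (2 * π), wd f1 f2 p1 p2 θ φ := by rw [hk]
    have hWzero : ∀ t, (t ≤ ε ∨ π - ε ≤ t) →
        (∫ φ in Ioo (0:ℝ) (2 * π), wfun f1 f2 p1 p2 t φ) = 0 := by
      intro t ht
      rw [setIntegral_congr_fun (g := fun _ => (0:ℝ)) measurableSet_Ioo
        (fun φ _ => wfun_supp hz2 hz4 t φ ht)]
      simp
    rw [Bform_eq_sphInt, Bform_eq_sphInt, ← sub_eq_zero]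
    unfold sphInt
    rw [← integral_sub hOfp hOpf]
    apply integral_eq_zero_of_antideriv (ε := ε)
      (W := fun t => (-(2 / a)) * ∫ φ in Ioo (0:ℝ) (2 * π), wfun f1 f2 p1 p2 t φ)
      hεp hεle (hOfp.sub hOpf)
    · intro θ hθ hmem
      simp only [Pi.sub_apply]
      rw [hident θ hθ]
      rw [setIntegral_congr_fun (g := fun _ => (0:ℝ)) measurableSet_Ioo
        (fun φ _ => wd_supp hz2 hz4 θ φ (notIcc hmem))]
      simp
    · intro θ hmem
      have hθIoo : θ ∈ Ioo (0:ℝ) π :=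
        ⟨lt_of_lt_of_le hεp hmem.1, lt_of_le_of_lt hmem.2 (by linarith)⟩
      have hder := hasDerivAt_param hcw hcwd hMwd
        (fun t ht φ => hasDerivAt_wfun hf1cd hf2cd hp1cd hp2cd ht φ) hθIoo
      have hder2 := hder.const_mul (-(2 / a))
      rw [← hident θ hθIoo] at hder2
      simpa using hder2
    · rw [hWzero ε (Or.inl le_rfl)]; ring
    · rw [hWzero (π - ε) (Or.inr le_rfl)]; ring
  · -- nonnegativity
    obtain ⟨MF, hMF0, hMF⟩ := BI_bound ha hb1 hb2 hf1 hf1 hf2 hf2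
    have hcF := contOn_BI ha hb1 hb2 hf1cd hf2cd hf1cd hf2cd
    have hOF := outer_integrableOn hcF hMF0 hMF
    have hcHd := contOn_Hd (f2 := f2) ha hb1 hb2 hf2cd
    have hcHf := contOn_Hfun (f2 := f2) ha hb1 hb2 hf2cd
    obtain ⟨MH, hMH0, hMH⟩ := bounded_of_periodic_support hcHd
      (Hd_periodic (a := a) hf2.2.1) hε2p hε2le
      (fun θ φ hθ => Hd_supp hs2 θ φ (notIcc hθ))
    have hhdint := mid_integrableOn hcHd hMH0 hMH
    have hdzero : ∫ θ in Ioo (0:ℝ) π, (∫ φ in Ioo (0:ℝ) (2 * π), Hd a b f2 θ φ) = 0 := by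
      apply integral_eq_zero_of_antideriv (ε := ε2)
        (W := fun t => ∫ φ in Ioo (0:ℝ) (2 * π), Hfun a b f2 t φ)
        hε2p hε2le hhdint
      · intro θ hθ hmem
        rw [setIntegral_congr_fun (g := fun _ => (0:ℝ)) measurableSet_Ioo
          (fun φ _ => Hd_supp hs2 θ φ (notIcc hmem))]
        simp
      · intro θ hmem
        have hθIoo : θ ∈ Ioo (0:ℝ) π :=
          ⟨lt_of_lt_of_le hε2p hmem.1, lt_of_le_of_lt hmem.2 (by linarith)⟩
        exact hasDerivAt_param hcHf hcHd hMH
          (fun t ht φ => hasDerivAt_Hfun ha hb1 hb2 hf2cd ht φ) hθIoo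
      · rw [setIntegral_congr_fun (g := fun _ => (0:ℝ)) measurableSet_Ioo
          (fun φ _ => Hfun_supp hs2 ε2 φ (Or.inl le_rfl))]
        simp
      · rw [setIntegral_congr_fun (g := fun _ => (0:ℝ)) measurableSet_Ioo
          (fun φ _ => Hfun_supp hs2 (π - ε2) φ (Or.inr le_rfl))]
        simp
    have hkey : ∀ θ ∈ Ioo (0:ℝ) π,
        -(∫ φ in Ioo (0:ℝ) (2 * π), Hd a b f2 θ φ) ≤
          (∫ φ in Ioo (0:ℝ) (2 * π), BI a b f1 f2 f1 f2 θ φ) * Real.sin θ := by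
      intro θ hθ
      have e1 : IntegrableOn (fun φ => BI a b f1 f2 f1 f2 θ φ * Real.sin θ)
          (Ioo (0:ℝ) (2 * π)) := (inner_integrableOn hcF hθ).mul_const _
      have e2 := inner_integrableOn hcHd hθ
      have h0 : 0 ≤ ∫ φ in Ioo (0:ℝ) (2 * π),
          (BI a b f1 f2 f1 f2 θ φ * Real.sin θ + Hd a b f2 θ φ) :=
        setIntegral_nonneg measurableSet_Ioo (fun φ _ => key_nonneg ha hb1 hb2 hθ φ)
      rw [integral_add e1 e2, integral_mul_const] at h0
      linarith
    rw [Bform_eq_sphInt]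
    unfold sphInt
    have hneg : IntegrableOn
        (fun θ => -(∫ φ in Ioo (0:ℝ) (2 * π), Hd a b f2 θ φ)) (Ioo (0:ℝ) π) :=
      hhdint.neg
    have hmono := setIntegral_mono_on hneg hOF measurableSet_Ioo hkey
    rw [integral_neg, hdzero] at hmono
    simpa using hmono


/-- Lemma `lemma:sym-bilinear`: the second-variation bilinear form
`B` at `(u_{a,b}, v_{a,b})` is symmetric and nonnegative. -/
theorem statement_3
    (a b : ℝ) (ha : 0 < a) (hb : b ∈ Ioo (-1 : ℝ) 1)
    (f1 f2 p1 p2 : ℝ → ℝ → ℝ)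
    (hf1 : AdmFirst f1) (hp1 : AdmFirst p1)
    (hf2 : AdmSecond f2) (hp2 : AdmSecond p2) :
    Bform a b f1 f2 p1 p2 = Bform a b p1 p2 f1 f2 ∧
    0 ≤ Bform a b f1 f2 f1 f2 :=
  statement_3' a b ha hb f1 f2 p1 p2 hf1 hp1 hf2 hp2
end
end

section
/- Let (u,v) be an axisymmetric (φ-independent) harmonic map from B₁∖Γ to the hyperbolic plane, and suppose there are constants a > 0, b ∈ (−1,1), α ∈ (1/2,1), β > 0 and C > 0 such that for all integers l,k ≥ 0 with l+k ≤ 1 and all 0 < r < 1/2: max_{S²}( |(r∂_r)^l ∇_{g₀}^k (u(r,·) − u_{a,b})| + e^{(3+α−k)u_{a,b}} |(r∂_r)^l ∇_{g₀}^k (v(r,·) − v_{a,b})| ) ≤ C r^β. Let w be a C¹ function of (ρ,z) on {(ρ,z) : 0 < r < 1/2, ρ > 0} satisfying ∂_ρw = 2ρ e^{4u} ∂_zv and ∂_zw = −2ρ e^{4u} ∂_ρv. Then there exist constants w₀, C' > 0 and β' > 0 such that |w(r,θ) − w₀ − r/a| ≤ C' r^{1+β'} (sinθ)^{−1/2} for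 all 0 < r < 1/2 and θ ∈ (0,π). -/
open Real MeasureTheory Set Filter

noncomputable section

namespace S6
lemma exp_sub_one_le (t : ℝ) (ht : 0 ≤ t) : Real.exp t - 1 ≤ t * Real.exp t := by
  have h1 : Real.exp (-t) * Real.exp t = 1 := by
    rw [← Real.exp_add]; simp
  have h2 : (1 - t) * Real.exp t ≤ Real.exp (-t) * Real.exp t :=
    mul_le_mul_of_nonneg_right (by linarith [Real.add_one_le_exp (-t)]) (Real.exp_pos t).le
  nlinarith

lemma abs_exp_sub_one_le (x : ℝ) : |Real.exp x - 1| ≤ |x| * Real.exp |x| := by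
  rcases le_or_gt 0 x with hx | hx
  · rw [abs_of_nonneg hx,
      abs_of_nonneg (by nlinarith [Real.one_le_exp hx] : (0:ℝ) ≤ Real.exp x - 1)]
    exact exp_sub_one_le x hx
  · rw [abs_of_neg hx,
      abs_of_nonpos (by nlinarith [Real.exp_lt_one_iff.2 hx] : Real.exp x - 1 ≤ 0)]
    have h1 := Real.add_one_le_exp x
    have h2 := Real.one_le_exp (by linarith : (0:ℝ) ≤ -x)
    nlinarith

lemma covNorm_nonneg (k : ℕ) (f : ℝ → ℝ → ℝ) (θ φ : ℝ) : 0 ≤ covNorm k f θ φ :=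
  Real.sqrt_nonneg _

lemma abs_le_covNorm_zero (f : ℝ → ℝ → ℝ) (θ φ : ℝ) : |f θ φ| ≤ covNorm 0 f θ φ := by
  unfold covNorm
  rw [show (∑ I : Fin 0 → Fin 2, (∏ j, sphWeight (I j) θ) * (covIter f 0 I θ φ) ^ 2)
      = f θ φ ^ 2 by
    rw [Fintype.sum_unique]; simp [covIter]]
  rw [Real.sqrt_sq_eq_abs]

lemma sphWeight_nonneg (i : Fin 2) (θ : ℝ) : 0 ≤ sphWeight i θ := by
  unfold sphWeight; split <;> positivity

lemma abs_pdθ_le_covNorm_one (f : ℝ → ℝ → ℝ) (θ φ : ℝ) : |pdθ f θ φ| ≤ covNorm 1 f θ φ := by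
  unfold covNorm
  have h0 : covIter f 1 (fun _ => 0) θ φ = pdθ f θ φ := by
    show covDer (covIter f 0) _ θ φ = _
    unfold covDer
    simp [pder2, covIter]
  have key : (pdθ f θ φ) ^ 2 ≤
      ∑ I : Fin 1 → Fin 2, (∏ j, sphWeight (I j) θ) * (covIter f 1 I θ φ) ^ 2 := by
    have hs := Finset.single_le_sum
      (f := fun I : Fin 1 → Fin 2 => (∏ j, sphWeight (I j) θ) * (covIter f 1 I θ φ) ^ 2)
      (fun I _ => mul_nonneg (Finset.prod_nonneg fun j _ => sphWeight_nonneg _ _) (sq_nonneg _))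
      (Finset.mem_univ (fun _ : Fin 1 => (0 : Fin 2)))
    calc (pdθ f θ φ) ^ 2 = (∏ j : Fin 1, sphWeight ((fun _ => (0:Fin 2)) j) θ) *
          (covIter f 1 (fun _ => 0) θ φ) ^ 2 := by
          rw [h0, Fin.prod_univ_one]; simp [sphWeight]
      _ ≤ _ := hs
  calc |pdθ f θ φ| = Real.sqrt ((pdθ f θ φ)^2) := (Real.sqrt_sq_eq_abs _).symm
    _ ≤ _ := Real.sqrt_le_sqrt key
end S6
namespace S6
lemma cylPt_apply (ρ z : ℝ) : cylPt ρ z = ρ • e3 0 + z • e3 2 := by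
  unfold cylPt e3
  ext i
  fin_cases i <;>
    simp [EuclideanSpace.single_apply, Matrix.cons_val_zero, Matrix.cons_val_one]

lemma sph_zero (r θ : ℝ) : sph r θ 0 = cylPt (r * Real.sin θ) (r * Real.cos θ) := by
  unfold sph cylPt
  congr 1
  funext i
  fin_cases i <;> simp

lemma cylPt_coord0 (ρ z : ℝ) : (cylPt ρ z) 0 = ρ := by
  unfold cylPt; simp

lemma cylPt_coord1 (ρ z : ℝ) : (cylPt ρ z) 1 = 0 := by
  unfold cylPt; simp

lemma norm_cylPt (ρ z : ℝ) : ‖cylPt ρ z‖ = Real.sqrt (ρ^2 + z^2) := by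
  rw [EuclideanSpace.norm_eq]
  congr 1
  rw [Fin.sum_univ_three]
  unfold cylPt
  simp [sq_abs]

lemma domain_open : IsOpen (B1 \ axisΓ) := by
  apply Metric.isOpen_ball.sdiff
  have : axisΓ = ((fun x : E3 => x 0) ⁻¹' {0}) ∩ ((fun x : E3 => x 1) ⁻¹' {0}) := by
    ext x; simp [axisΓ]
  rw [this]
  exact ((isClosed_singleton.preimage (by fun_prop)).inter
    (isClosed_singleton.preimage (by fun_prop)))

lemma mem_domain {r θ : ℝ} (hr : r ∈ Ioo (0:ℝ) (1/2)) (hθ : θ ∈ Ioo (0:ℝ) π) :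
    cylPt (r * Real.sin θ) (r * Real.cos θ) ∈ B1 \ axisΓ := by
  have hs : 0 < Real.sin θ := Real.sin_pos_of_pos_of_lt_pi hθ.1 hθ.2
  constructor
  · show _ ∈ Metric.ball _ _
    rw [Metric.mem_ball, dist_zero_right, norm_cylPt]
    have : (r * Real.sin θ)^2 + (r * Real.cos θ)^2 = r^2 := by
      have := Real.sin_sq_add_cos_sq θ; nlinarith
    rw [this, Real.sqrt_sq hr.1.le]
    linarith [hr.2]
  · intro hx
    have := hx.1
    rw [cylPt_coord0] at this
    nlinarith [hr.1]
end S6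
namespace S6

lemma fderivE3_pair (F : E3 →L[ℝ] ℝ) (ρ z : ℝ) :
    F (cylPt ρ z) = ρ * F (e3 0) + z * F (e3 2) := by
  rw [cylPt_apply, map_add, F.map_smul, F.map_smul]; simp

lemma hasDerivAt_inner_radial (s c r : ℝ) :
    HasDerivAt (fun t : ℝ => cylPt (t * s) (t * c)) (cylPt s c) r := by
  have h1 : HasDerivAt (fun t : ℝ => (t * s) • e3 0) (s • e3 0) r := by
    simpa using (((hasDerivAt_id r).mul_const s).smul_const (e3 0))
  have h2 : HasDerivAt (fun t : ℝ => (t * c) • e3 2) (c • e3 2) r := by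
    simpa using (((hasDerivAt_id r).mul_const c).smul_const (e3 2))
  have := h1.fun_add h2
  simp only [← cylPt_apply] at this
  exact this

lemma hasDerivAt_inner_angular (r θ : ℝ) :
    HasDerivAt (fun t : ℝ => cylPt (r * Real.sin t) (r * Real.cos t))
      (cylPt (r * Real.cos θ) (-(r * Real.sin θ))) θ := by
  have h1 : HasDerivAt (fun t : ℝ => (r * Real.sin t) • e3 0) ((r * Real.cos θ) • e3 0) θ :=
    ((Real.hasDerivAt_sin θ).const_mul r).smul_const (e3 0)
  have h2 : HasDerivAt (fun t : ℝ => (r * Real.cos t) • e3 2) ((-(r * Real.sin θ)) • e3 2) θ := by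
    simpa [mul_comm, mul_neg] using ((Real.hasDerivAt_cos θ).const_mul r).smul_const (e3 2)
  have := h1.fun_add h2
  simp only [← cylPt_apply] at this
  exact this

lemma hasDerivAt_inner_rho (ρ z : ℝ) :
    HasDerivAt (fun t : ℝ => cylPt t z) (cylPt 1 0) ρ := by
  have h1 : HasDerivAt (fun t : ℝ => t • e3 0) ((1:ℝ) • e3 0) ρ :=
    (hasDerivAt_id ρ).smul_const (e3 0)
  have h2 : HasDerivAt (fun _ : ℝ => z • e3 2) ((0:ℝ) • e3 2) ρ := by
    simpa using hasDerivAt_const ρ (z • e3 2)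
  have := h1.fun_add h2
  simp only [← cylPt_apply] at this
  simpa using this

lemma hasDerivAt_inner_z (ρ z : ℝ) :
    HasDerivAt (fun t : ℝ => cylPt ρ t) (cylPt 0 1) z := by
  have h1 : HasDerivAt (fun _ : ℝ => ρ • e3 0) ((0:ℝ) • e3 0) z := by
    simpa using hasDerivAt_const z (ρ • e3 0)
  have h2 : HasDerivAt (fun t : ℝ => t • e3 2) ((1:ℝ) • e3 2) z :=
    (hasDerivAt_id z).smul_const (e3 2)
  have := h1.fun_add h2
  simp only [← cylPt_apply] at this
  simpa using this

/-- derivative of `t ↦ f (cylPt (t sinθ) (t cosθ))`. -/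
lemma hasDerivAt_radial (f : E3 → ℝ) (r θ : ℝ)
    (hf : DifferentiableAt ℝ f (cylPt (r * Real.sin θ) (r * Real.cos θ))) :
    HasDerivAt (fun t => f (cylPt (t * Real.sin θ) (t * Real.cos θ)))
      (Real.sin θ * fderiv ℝ f (cylPt (r * Real.sin θ) (r * Real.cos θ)) (e3 0) +
       Real.cos θ * fderiv ℝ f (cylPt (r * Real.sin θ) (r * Real.cos θ)) (e3 2)) r := by
  have := hf.hasFDerivAt.comp_hasDerivAt r (hasDerivAt_inner_radial (Real.sin θ) (Real.cos θ) r)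
  rwa [fderivE3_pair] at this

lemma hasDerivAt_angular (f : E3 → ℝ) (r θ : ℝ)
    (hf : DifferentiableAt ℝ f (cylPt (r * Real.sin θ) (r * Real.cos θ))) :
    HasDerivAt (fun t => f (cylPt (r * Real.sin t) (r * Real.cos t)))
      ((r * Real.cos θ) * fderiv ℝ f (cylPt (r * Real.sin θ) (r * Real.cos θ)) (e3 0) -
       (r * Real.sin θ) * fderiv ℝ f (cylPt (r * Real.sin θ) (r * Real.cos θ)) (e3 2)) θ := by
  have := hf.hasFDerivAt.comp_hasDerivAt θ (hasDerivAt_inner_angular r θ)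
  rw [fderivE3_pair] at this
  simpa [sub_eq_add_neg, Function.comp_def] using this

lemma dρ_cyl (f : E3 → ℝ) (ρ z : ℝ) (hf : DifferentiableAt ℝ f (cylPt ρ z)) :
    dρ (fun ρ' z' => f (cylPt ρ' z')) ρ z = fderiv ℝ f (cylPt ρ z) (e3 0) := by
  have h := hf.hasFDerivAt.comp_hasDerivAt ρ (hasDerivAt_inner_rho ρ z)
  rw [fderivE3_pair] at h
  have h2 : HasDerivAt (fun s => f (cylPt s z))
      (1 * fderiv ℝ f (cylPt ρ z) (e3 0) + 0 * fderiv ℝ f (cylPt ρ z) (e3 2)) ρ := h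
  unfold dρ
  rw [h2.deriv]; ring

lemma dz_cyl (f : E3 → ℝ) (ρ z : ℝ) (hf : DifferentiableAt ℝ f (cylPt ρ z)) :
    dz (fun ρ' z' => f (cylPt ρ' z')) ρ z = fderiv ℝ f (cylPt ρ z) (e3 2) := by
  have h := hf.hasFDerivAt.comp_hasDerivAt z (hasDerivAt_inner_z ρ z)
  rw [fderivE3_pair] at h
  have h2 : HasDerivAt (fun s => f (cylPt ρ s))
      (0 * fderiv ℝ f (cylPt ρ z) (e3 0) + 1 * fderiv ℝ f (cylPt ρ z) (e3 2)) z := h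
  unfold dz
  rw [h2.deriv]; ring

/- versions for two-variable functions `W` -/
lemma fderiv2_pair (G : ℝ × ℝ →L[ℝ] ℝ) (p : ℝ × ℝ) :
    G p = p.1 * G (1, 0) + p.2 * G (0, 1) := by
  have hp : p = p.1 • ((1:ℝ), (0:ℝ)) + p.2 • ((0:ℝ), (1:ℝ)) := by
    apply Prod.ext <;> simp
  rw [hp, map_add, G.map_smul, G.map_smul]; simp

lemma dρ_eq (W : ℝ → ℝ → ℝ) (q : ℝ × ℝ)
    (hW : DifferentiableAt ℝ (fun p : ℝ × ℝ => W p.1 p.2) q) :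
    dρ W q.1 q.2 = fderiv ℝ (fun p : ℝ × ℝ => W p.1 p.2) q (1, 0) := by
  have hin : HasDerivAt (fun s : ℝ => (s, q.2)) ((1:ℝ), (0:ℝ)) q.1 :=
    (hasDerivAt_id q.1).prodMk (hasDerivAt_const q.1 q.2)
  have := hW.hasFDerivAt.comp_hasDerivAt q.1 (by simpa using hin)
  unfold dρ
  exact this.deriv

lemma dz_eq (W : ℝ → ℝ → ℝ) (q : ℝ × ℝ)
    (hW : DifferentiableAt ℝ (fun p : ℝ × ℝ => W p.1 p.2) q) :
    dz W q.1 q.2 = fderiv ℝ (fun p : ℝ × ℝ => W p.1 p.2) q (0, 1) := by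
  have hin : HasDerivAt (fun s : ℝ => (q.1, s)) ((0:ℝ), (1:ℝ)) q.2 :=
    (hasDerivAt_const q.2 q.1).prodMk (hasDerivAt_id q.2)
  have := hW.hasFDerivAt.comp_hasDerivAt q.2 (by simpa using hin)
  unfold dz
  exact this.deriv

lemma hasDerivAt_W_radial (W : ℝ → ℝ → ℝ) (r θ : ℝ) (q : ℝ × ℝ)
    (hq : q = (r * Real.sin θ, r * Real.cos θ))
    (hW : DifferentiableAt ℝ (fun p : ℝ × ℝ => W p.1 p.2) q) :
    HasDerivAt (fun t => W (t * Real.sin θ) (t * Real.cos θ))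
      (Real.sin θ * fderiv ℝ (fun p : ℝ × ℝ => W p.1 p.2) q (1, 0) +
       Real.cos θ * fderiv ℝ (fun p : ℝ × ℝ => W p.1 p.2) q (0, 1)) r := by
  have hin : HasDerivAt (fun t : ℝ => (t * Real.sin θ, t * Real.cos θ))
      (Real.sin θ, Real.cos θ) r :=
    by simpa using (((hasDerivAt_id r).mul_const (Real.sin θ)).prodMk
      ((hasDerivAt_id r).mul_const (Real.cos θ)))
  subst hq
  have h := hW.hasFDerivAt.comp_hasDerivAt r hin
  rw [fderiv2_pair] at h
  simpa [Function.comp_def] using h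

lemma hasDerivAt_W_angular (W : ℝ → ℝ → ℝ) (r θ : ℝ) (q : ℝ × ℝ)
    (hq : q = (r * Real.sin θ, r * Real.cos θ))
    (hW : DifferentiableAt ℝ (fun p : ℝ × ℝ => W p.1 p.2) q) :
    HasDerivAt (fun t => W (r * Real.sin t) (r * Real.cos t))
      ((r * Real.cos θ) * fderiv ℝ (fun p : ℝ × ℝ => W p.1 p.2) q (1, 0) -
       (r * Real.sin θ) * fderiv ℝ (fun p : ℝ × ℝ => W p.1 p.2) q (0, 1)) θ := by
  have hin : HasDerivAt (fun t : ℝ => (r * Real.sin t, r * Real.cos t))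
      (r * Real.cos θ, -(r * Real.sin θ)) θ := by
    refine HasDerivAt.prodMk ?_ ?_
    · exact (Real.hasDerivAt_sin θ).const_mul r
    · simpa [mul_comm, mul_neg] using (Real.hasDerivAt_cos θ).const_mul r
  subst hq
  have h := hW.hasFDerivAt.comp_hasDerivAt θ hin
  rw [fderiv2_pair] at h
  simpa [sub_eq_add_neg, Function.comp_def] using h

end S6
namespace S6

/-- `P = 1 + cos²θ + 2b cosθ`. -/
def Pf (b θ : ℝ) : ℝ := 1 + Real.cos θ ^ 2 + 2 * b * Real.cos θ

lemma Pf_pos {b : ℝ} (hb : b ∈ Ioo (-1:ℝ) 1) (θ : ℝ) : 1 - b^2 ≤ Pf b θ := by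
  have h : Pf b θ = (Real.cos θ + b)^2 + (1 - b^2) := by unfold Pf; ring
  nlinarith [sq_nonneg (Real.cos θ + b)]

lemma Pf_pos' {b : ℝ} (hb : b ∈ Ioo (-1:ℝ) 1) (θ : ℝ) : 0 < Pf b θ := by
  have := Pf_pos hb θ
  nlinarith [hb.1, hb.2]

lemma Pf_le_four {b : ℝ} (hb : b ∈ Ioo (-1:ℝ) 1) (θ : ℝ) : Pf b θ ≤ 4 := by
  have h1 := Real.neg_one_le_cos θ
  have h2 := Real.cos_le_one θ
  have := abs_le.2 ⟨h1, h2⟩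
  unfold Pf
  nlinarith [hb.1, hb.2, sq_nonneg (Real.cos θ - 1), sq_nonneg (Real.cos θ + 1)]

lemma D_pos {a b : ℝ} (ha : 0 < a) (hb : b ∈ Ioo (-1:ℝ) 1) :
    0 < 2 * a * Real.sqrt (1 - b^2) := by
  have : (0:ℝ) < 1 - b^2 := by nlinarith [hb.1, hb.2]
  have h := Real.sqrt_pos.2 this
  positivity

lemma exp_t_uab {a b : ℝ} (ha : 0 < a) (hb : b ∈ Ioo (-1:ℝ) 1) {θ : ℝ}
    (hθ : θ ∈ Ioo (0:ℝ) π) (t : ℝ) :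
    Real.exp (t * uab a b θ) =
      (Pf b θ / (2 * a * Real.sqrt (1 - b^2))) ^ (t/2 : ℝ) * Real.sin θ ^ (-t : ℝ) := by
  have hs : 0 < Real.sin θ := Real.sin_pos_of_pos_of_lt_pi hθ.1 hθ.2
  have hP := Pf_pos' hb θ
  have hD := D_pos ha hb
  set D := 2 * a * Real.sqrt (1 - b^2) with hDdef
  rw [Real.rpow_def_of_pos (by positivity), Real.rpow_def_of_pos hs, ← Real.exp_add]
  congr 1
  unfold uab
  have h1 : Real.log (Pf b θ / D) = Real.log (Pf b θ) - Real.log D :=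
    Real.log_div hP.ne' hD.ne'
  have h2 : Real.log (D / Pf b θ) = Real.log D - Real.log (Pf b θ) :=
    Real.log_div hD.ne' hP.ne'
  have h3 : (2 * a * Real.sqrt (1 - b ^ 2) / (1 + Real.cos θ ^ 2 + 2 * b * Real.cos θ))
      = D / Pf b θ := rfl
  rw [h3, h2, h1]
  ring

lemma exp4_uab {a b : ℝ} (ha : 0 < a) (hb : b ∈ Ioo (-1:ℝ) 1) {θ : ℝ}
    (hθ : θ ∈ Ioo (0:ℝ) π) :
    Real.exp (4 * uab a b θ) = Pf b θ ^ 2 / (4 * a^2 * (1 - b^2) * Real.sin θ ^ 4) := by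
  have hs : 0 < Real.sin θ := Real.sin_pos_of_pos_of_lt_pi hθ.1 hθ.2
  have hP := Pf_pos' hb θ
  have hD := D_pos ha hb
  have hb2 : (0:ℝ) < 1 - b^2 := by nlinarith [hb.1, hb.2]
  rw [exp_t_uab ha hb hθ 4]
  have e1 : ((4:ℝ)/2 : ℝ) = ((2:ℕ) : ℝ) := by norm_num
  have e2 : (-(4:ℝ) : ℝ) = ((-4 : ℤ) : ℝ) := by norm_num
  rw [e1, Real.rpow_natCast, e2, Real.rpow_intCast]
  have e3 : Real.sin θ ^ (-4 : ℤ) = (Real.sin θ ^ 4)⁻¹ := by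
    rw [zpow_neg]; norm_cast
  rw [e3]
  have hDsq : (2 * a * Real.sqrt (1 - b^2))^2 = 4 * a^2 * (1 - b^2) := by
    have := Real.sq_sqrt hb2.le
    nlinarith
  rw [div_pow, hDsq]
  field_simp

lemma hasDerivAt_vab {a b : ℝ} (ha : 0 < a) (hb : b ∈ Ioo (-1:ℝ) 1) {θ : ℝ}
    (hθ : θ ∈ Ioo (0:ℝ) π) :
    HasDerivAt (vab a b) (-2 * a * (1 - b^2) * Real.sin θ ^ 3 / Pf b θ ^ 2) θ := by
  have hP := Pf_pos' hb θ
  have hn : HasDerivAt (fun x => a * (b + b * Real.cos x ^ 2 + 2 * Real.cos x))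
      (a * (b * (2 * Real.cos θ * -Real.sin θ) + 2 * -Real.sin θ)) θ := by
    apply HasDerivAt.const_mul
    have hc := Real.hasDerivAt_cos θ
    have h1 : HasDerivAt (fun x => b * Real.cos x ^ 2) (b * (2 * Real.cos θ * -Real.sin θ)) θ := by
      have := (hc.pow 2).const_mul b
      simpa [mul_comm, mul_assoc, mul_left_comm] using this
    have h2 : HasDerivAt (fun x => 2 * Real.cos x) (2 * -Real.sin θ) θ := hc.const_mul 2
    simpa using ((hasDerivAt_const θ b).fun_add h1).fun_add h2
  have hd : HasDerivAt (fun x => 1 + Real.cos x ^ 2 + 2 * b * Real.cos x)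
      (2 * Real.cos θ * -Real.sin θ + 2 * b * -Real.sin θ) θ := by
    have hc := Real.hasDerivAt_cos θ
    have h1 : HasDerivAt (fun x => Real.cos x ^ 2) (2 * Real.cos θ * -Real.sin θ) θ := by
      simpa [mul_comm, mul_assoc, mul_left_comm] using hc.fun_pow 2
    have h2 : HasDerivAt (fun x => 2 * b * Real.cos x) (2 * b * -Real.sin θ) θ :=
      hc.const_mul (2*b)
    simpa using ((hasDerivAt_const θ (1:ℝ)).fun_add h1).fun_add h2
  have hne : (fun x => 1 + Real.cos x ^ 2 + 2 * b * Real.cos x) θ ≠ 0 := by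
    show Pf b θ ≠ 0; exact hP.ne'
  have := hn.div hd hne
  have heq : (a * (b * (2 * Real.cos θ * -Real.sin θ) + 2 * -Real.sin θ) *
        (1 + Real.cos θ ^ 2 + 2 * b * Real.cos θ) -
      a * (b + b * Real.cos θ ^ 2 + 2 * Real.cos θ) *
        (2 * Real.cos θ * -Real.sin θ + 2 * b * -Real.sin θ)) /
      (1 + Real.cos θ ^ 2 + 2 * b * Real.cos θ) ^ 2
      = -2 * a * (1 - b^2) * Real.sin θ ^ 3 / Pf b θ ^ 2 := by
    have hsc : Real.sin θ ^ 2 = 1 - Real.cos θ ^ 2 := by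
      have := Real.sin_sq_add_cos_sq θ; linarith
    unfold Pf
    congr 1
    linear_combination (2*a*(1-b^2)*Real.sin θ) * hsc
  rw [heq] at this
  exact this
end S6
namespace S6
open Topology

lemma rpow_base_le {x t K : ℝ} (hx : 0 < x) (hK : x ≤ K) (ht0 : 0 ≤ t) (ht1 : t ≤ 1) :
    x ^ (t : ℝ) ≤ max 1 K := by
  have h1 : x ^ (t:ℝ) ≤ K ^ (t:ℝ) := Real.rpow_le_rpow hx.le hK ht0
  rcases le_total K 1 with hK1 | hK1
  · exact h1.trans ((Real.rpow_le_one (by linarith) hK1 ht0).trans (le_max_left _ _))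
  · refine h1.trans (le_trans ?_ (le_max_right _ _))
    calc K ^ (t:ℝ) ≤ K ^ (1:ℝ) := Real.rpow_le_rpow_of_exponent_le hK1 ht1
      _ = K := Real.rpow_one K

lemma model_identity {a b : ℝ} (ha : 0 < a) (hb : b ∈ Ioo (-1:ℝ) 1) {θ : ℝ}
    (hθ : θ ∈ Ioo (0:ℝ) π) :
    -2 * Real.sin θ * Real.exp (4 * uab a b θ) *
      (-2 * a * (1 - b^2) * Real.sin θ ^ 3 / Pf b θ ^ 2) = 1 / a := by
  have hs : 0 < Real.sin θ := Real.sin_pos_of_pos_of_lt_pi hθ.1 hθ.2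
  have hP := Pf_pos' hb θ
  have hb2 : (0:ℝ) < 1 - b^2 := by nlinarith [hb.1, hb.2]
  rw [exp4_uab ha hb hθ]
  field_simp
  ring

lemma mvt_bound (f f' : ℝ → ℝ) (s : Set ℝ) (hs : Convex ℝ s) (Cb : ℝ)
    (hf : ∀ x ∈ s, HasDerivAt f (f' x) x) (hbd : ∀ x ∈ s, |f' x| ≤ Cb)
    {x y : ℝ} (hx : x ∈ s) (hy : y ∈ s) : |f y - f x| ≤ Cb * |y - x| := by
  have := hs.norm_image_sub_le_of_norm_hasDerivWithin_le
    (fun z hz => (hf z hz).hasDerivWithinAt)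
    (fun z hz => by simpa [Real.norm_eq_abs] using hbd z hz) hx hy
  simpa [Real.norm_eq_abs] using this

lemma key_int (g g' : ℝ → ℝ) (M β : ℝ) (hβ : 0 < β) (hM : 0 ≤ M)
    (hg : ∀ r ∈ Ioo (0:ℝ) (1/2), HasDerivAt g (g' r) r)
    (hbd : ∀ r ∈ Ioo (0:ℝ) (1/2), |g' r| ≤ M * r ^ (β:ℝ)) :
    ∃ L : ℝ, Tendsto g (𝓝[>] (0:ℝ)) (𝓝 L) ∧
      ∀ r ∈ Ioo (0:ℝ) (1/2), |g r - L| ≤ M / (1 + β) * r ^ ((1 + β : ℝ)) := by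
  set h : ℝ → ℝ := fun r => M / (1 + β) * r ^ ((1+β : ℝ)) with hh
  have hb1 : (0:ℝ) < 1 + β := by linarith
  have hd : ∀ r ∈ Ioo (0:ℝ) (1/2), HasDerivAt h (M * r ^ (β:ℝ)) r := by
    intro r hr
    have := (Real.hasDerivAt_rpow_const (x := r) (p := 1+β)
      (Or.inl hr.1.ne')).const_mul (M / (1+β))
    have e : M / (1 + β) * ((1 + β) * r ^ ((1 + β - 1 : ℝ))) = M * r ^ (β:ℝ) := by
      rw [show (1 + β - 1 : ℝ) = β by ring]
      field_simp
    rwa [e] at this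
  have hnn : ∀ r ∈ Ioo (0:ℝ) (1/2), 0 ≤ h r := by
    intro r hr
    have : (0:ℝ) ≤ r ^ ((1+β:ℝ)) := Real.rpow_nonneg hr.1.le _
    positivity
  -- monotone auxiliary functions
  have mono : ∀ (σ : ℝ), σ = 1 ∨ σ = -1 →
      MonotoneOn (fun r => h r + σ * g r) (Ioo (0:ℝ) (1/2)) := by
    intro σ hσ
    apply monotoneOn_of_deriv_nonneg (convex_Ioo _ _)
    · intro x hx
      exact (((hd x hx).add ((hg x hx).const_mul σ)).continuousAt).continuousWithinAt
    · rw [interior_Ioo]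
      intro x hx
      exact ((hd x hx).add ((hg x hx).const_mul σ)).differentiableAt.differentiableWithinAt
    · rw [interior_Ioo]
      intro x hx
      rw [((hd x hx).fun_add ((hg x hx).const_mul σ)).deriv]
      have h1 := abs_le.1 (hbd x hx)
      rcases hσ with h2 | h2 <;> rw [h2] <;> nlinarith [h1.1, h1.2]
  have mono1 := mono 1 (Or.inl rfl)
  have mono2 := mono (-1) (Or.inr rfl)
  have hq : (1/4 : ℝ) ∈ Ioo (0:ℝ) (1/2) := by norm_num
  have hne : (Ioo (0:ℝ) (1/2)).Nonempty := ⟨1/4, hq⟩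
  -- bounded below
  have bdd : ∀ (σ : ℝ), σ = 1 ∨ σ = -1 →
      BddBelow ((fun r => h r + σ * g r) '' Ioo (0:ℝ) (1/2)) := by
    intro σ hσ
    refine ⟨min ((fun r => h r + σ * g r) (1/4)) (-(fun r => h r + (-σ) * g r) (1/4)), ?_⟩
    rintro y ⟨r, hr, rfl⟩
    rcases le_total r (1/4 : ℝ) with hr4 | hr4
    · have h2 : (fun r => h r + (-σ) * g r) r ≤ (fun r => h r + (-σ) * g r) (1/4) := by
        rcases hσ with h3 | h3 <;> rw [h3] <;>
          [exact mono2 hr hq hr4; simpa using mono1 hr hq hr4]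
      have h3 := hnn r hr
      simp only at h2 ⊢
      refine le_trans (min_le_right _ _) ?_
      linarith
    · have := (by rcases hσ with h3 | h3 <;> rw [h3] <;>
        [exact mono1 hq hr hr4; exact mono2 hq hr hr4] :
        (fun r => h r + σ * g r) (1/4) ≤ (fun r => h r + σ * g r) r)
      exact le_trans (min_le_left _ _) this
  have T1 := MonotoneOn.tendsto_nhdsWithin_Ioo_right hne mono1 (bdd 1 (Or.inl rfl))
  have T2 := MonotoneOn.tendsto_nhdsWithin_Ioo_right hne mono2 (bdd (-1) (Or.inr rfl))
  set L1 := sInf ((fun r => h r + 1 * g r) '' Ioo (0:ℝ) (1/2))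
  set L2 := sInf ((fun r => h r + (-1) * g r) '' Ioo (0:ℝ) (1/2))
  refine ⟨(L1 - L2)/2, ?_, ?_⟩
  · have : Tendsto (fun r => ((h r + 1 * g r) - (h r + (-1) * g r))/2)
        (𝓝[>] (0:ℝ)) (𝓝 ((L1 - L2)/2)) := (T1.sub T2).div_const 2
    refine this.congr (fun r => by ring)
  · intro r hr
    -- for s < r in the interval, |g r - g s| ≤ h r - h s ≤ h r
    have key : ∀ s ∈ Ioo (0:ℝ) r, |g r - g s| ≤ h r := by
      intro s hs
      have hsI : s ∈ Ioo (0:ℝ) (1/2) := ⟨hs.1, lt_trans hs.2 hr.2⟩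
      have e1 := mono1 hsI hr hs.2.le
      have e2 := mono2 hsI hr hs.2.le
      have e3 := hnn s hsI
      simp only at e1 e2
      rw [abs_le]
      constructor <;> nlinarith
    have Tg : Tendsto (fun s => |g r - g s|) (𝓝[>] (0:ℝ)) (𝓝 |g r - (L1 - L2)/2|) := by
      have : Tendsto g (𝓝[>] (0:ℝ)) (𝓝 ((L1 - L2)/2)) := by
        have : Tendsto (fun s => ((h s + 1 * g s) - (h s + (-1) * g s))/2)
            (𝓝[>] (0:ℝ)) (𝓝 ((L1 - L2)/2)) := (T1.sub T2).div_const 2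
        refine this.congr (fun s => by ring)
      exact ((tendsto_const_nhds.sub this).abs)
    have hev : ∀ᶠ s in 𝓝[>] (0:ℝ), |g r - g s| ≤ h r := by
      filter_upwards [Ioo_mem_nhdsGT_of_mem (⟨le_refl (0:ℝ), hr.1⟩ : (0:ℝ) ∈ Ico (0:ℝ) r)]
        with s hs using key s hs
    exact le_of_tendsto Tg hev

end S6
namespace S6
open Topology

lemma key_int' (g : ℝ → ℝ) (M β : ℝ) (hβ : 0 < β) (hM : 0 ≤ M)
    (hg : ∀ r ∈ Ioo (0:ℝ) (1/2), ∃ d, HasDerivAt g d r ∧ |d| ≤ M * r ^ (β:ℝ)) :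
    ∃ L : ℝ, ∀ r ∈ Ioo (0:ℝ) (1/2), |g r - L| ≤ M / (1 + β) * r ^ ((1 + β : ℝ)) := by
  choose gd h1 h2 using hg
  set g' : ℝ → ℝ := fun r => if h : r ∈ Ioo (0:ℝ) (1/2) then gd r h else 0 with hg'
  have e1 : ∀ r ∈ Ioo (0:ℝ) (1/2), HasDerivAt g (g' r) r := by
    intro r hr; rw [hg']; simp only [hr, dif_pos]; exact h1 r hr
  have e2 : ∀ r ∈ Ioo (0:ℝ) (1/2), |g' r| ≤ M * r ^ (β:ℝ) := by
    intro r hr; rw [hg']; simp only [hr, dif_pos]; exact h2 r hr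
  obtain ⟨L, _, hL⟩ := key_int g g' M β hβ hM e1 e2
  exact ⟨L, hL⟩

open scoped Classical in
lemma mvt_bound' (f : ℝ → ℝ) (s : Set ℝ) (hs : Convex ℝ s) (Cb : ℝ)
    (hf : ∀ x ∈ s, ∃ d, HasDerivAt f d x ∧ |d| ≤ Cb)
    {x y : ℝ} (hx : x ∈ s) (hy : y ∈ s) : |f y - f x| ≤ Cb * |y - x| := by
  choose fd h1 h2 using hf
  set f' : ℝ → ℝ := fun z => if h : z ∈ s then fd z h else 0 with hf'
  refine mvt_bound f f' s hs Cb ?_ ?_ hx hy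
  · intro z hz; rw [hf']; simp only [hz, dif_pos]; exact h1 z hz
  · intro z hz; rw [hf']; simp only [hz, dif_pos]; exact h2 z hz

lemma le_zero_of_le_rpow {d cc β : ℝ} (hβ : 0 < β)
    (h : ∀ r ∈ Ioo (0:ℝ) (1/2), d ≤ cc * r ^ ((1 + β : ℝ))) : d ≤ 0 := by
  have hcont : ContinuousAt (fun r : ℝ => r ^ ((1 + β : ℝ))) 0 :=
    Real.continuousAt_rpow_const 0 (1+β) (Or.inr (by linarith))
  have h0 : (0:ℝ) ^ ((1 + β : ℝ)) = 0 := Real.zero_rpow (by linarith)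
  have T : Tendsto (fun r : ℝ => cc * r ^ ((1 + β : ℝ))) (𝓝[>] (0:ℝ)) (𝓝 0) := by
    have := (hcont.tendsto.const_mul cc).mono_left (nhdsWithin_le_nhds (s := Ioi (0:ℝ)))
    rwa [h0, mul_zero] at this
  refine ge_of_tendsto T ?_
  filter_upwards [Ioo_mem_nhdsGT_of_mem (⟨le_refl (0:ℝ), by norm_num⟩ : (0:ℝ) ∈ Ico (0:ℝ) (1/2))]
    with r hr using h r hr

end S6
/-- part of Theorem `NHG`: expansion of the twist metric
coefficient `w` near an extreme puncture: `w = w₀ + r/a + O(r^{1+β'} (sinθ)^{−1/2})`. -/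
theorem statement_6
    (u v : E3 → ℝ)
    (hharm : HarmonicPair u v (B1 \ axisΓ))
    (haxiu : ∀ r θ φ φ' : ℝ, u (sph r θ φ) = u (sph r θ φ'))
    (haxiv : ∀ r θ φ φ' : ℝ, v (sph r θ φ) = v (sph r θ φ'))
    (a b α β C : ℝ) (ha : 0 < a) (hb : b ∈ Ioo (-1 : ℝ) 1)
    (hα : α ∈ Ioo (1 / 2 : ℝ) 1) (hβ : 0 < β) (hC : 0 < C)
    (htan : ∀ l k : ℕ, l + k ≤ 1 →
      ∀ r ∈ Ioo (0 : ℝ) (1 / 2), ∀ θ ∈ Ioo (0 : ℝ) π, ∀ φ : ℝ,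
        covNorm k (fun θ' φ' =>
            (Dr^[l] (fun s θ'' φ'' => u (sph s θ'' φ'') - uab a b θ'')) r θ' φ') θ φ
          + Real.exp ((3 + α - k) * uab a b θ) *
            covNorm k (fun θ' φ' =>
              (Dr^[l] (fun s θ'' φ'' => v (sph s θ'' φ'') - vab a b θ'')) r θ' φ') θ φ
        ≤ C * r ^ β)
    (W : ℝ → ℝ → ℝ)
    (hWreg : ContDiffOn ℝ 1 (fun p : ℝ × ℝ => W p.1 p.2)
      {p : ℝ × ℝ | 0 < p.1 ∧ Real.sqrt (p.1 ^ 2 + p.2 ^ 2) < 1 / 2})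
    (hWρ : ∀ p : ℝ × ℝ, 0 < p.1 → Real.sqrt (p.1 ^ 2 + p.2 ^ 2) < 1 / 2 →
      dρ W p.1 p.2 =
        2 * p.1 * Real.exp (4 * u (cylPt p.1 p.2)) *
          dz (fun ρ z => v (cylPt ρ z)) p.1 p.2)
    (hWz : ∀ p : ℝ × ℝ, 0 < p.1 → Real.sqrt (p.1 ^ 2 + p.2 ^ 2) < 1 / 2 →
      dz W p.1 p.2 =
        -(2 * p.1 * Real.exp (4 * u (cylPt p.1 p.2)) *
          dρ (fun ρ z => v (cylPt ρ z)) p.1 p.2)) :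
    ∃ w₀ : ℝ, ∃ C' > (0 : ℝ), ∃ β' > (0 : ℝ),
      ∀ r ∈ Ioo (0 : ℝ) (1 / 2), ∀ θ ∈ Ioo (0 : ℝ) π,
        |W (r * Real.sin θ) (r * Real.cos θ) - w₀ - r / a|
          ≤ C' * r ^ (1 + β') * Real.sin θ ^ (-(1 / 2) : ℝ) := by
  classical
  obtain ⟨hu3, hv3, -⟩ := hharm
  have hb2 : (0:ℝ) < 1 - b^2 := by nlinarith [hb.1, hb.2]
  have hDpos : 0 < 2 * a * Real.sqrt (1 - b^2) := S6.D_pos ha hb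
  set D := 2 * a * Real.sqrt (1 - b^2) with hD
  set K₂ := max (1:ℝ) (4 / D) with hK2
  have hK2pos : (0:ℝ) < K₂ := lt_of_lt_of_le one_pos (le_max_left _ _)
  set K₄ := 4*C*Real.exp (4*C)/a + 2*C*Real.exp (4*C)*K₂ with hK4
  have hK4pos : 0 < K₄ := by positivity
  set K₅ := 2*C*Real.exp (4*C)*K₂ with hK5
  have hK5pos : 0 < K₅ := by positivity
  have hβ1 : (0:ℝ) < 1 + β := by linarith
  -- the two key derivative estimates
  -- basic positivity of the W-domain and membership
  have hSW : IsOpen {p : ℝ × ℝ | 0 < p.1 ∧ Real.sqrt (p.1 ^ 2 + p.2 ^ 2) < 1/2} := by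
    have h1 : IsOpen {p : ℝ × ℝ | 0 < p.1} := isOpen_lt continuous_const continuous_fst
    have h2 : IsOpen {p : ℝ × ℝ | Real.sqrt (p.1 ^ 2 + p.2 ^ 2) < 1/2} :=
      isOpen_lt (Real.continuous_sqrt.comp
        ((continuous_fst.pow 2).add (continuous_snd.pow 2))) continuous_const
    exact h1.and h2
  have hq2 : ∀ r ∈ Ioo (0:ℝ) (1/2), ∀ θ ∈ Ioo (0:ℝ) π,
      0 < r * Real.sin θ ∧ Real.sqrt ((r * Real.sin θ)^2 + (r * Real.cos θ)^2) < 1/2 := by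
    intro r hr θ hθ
    have hs := Real.sin_pos_of_pos_of_lt_pi hθ.1 hθ.2
    refine ⟨mul_pos hr.1 hs, ?_⟩
    have he : (r * Real.sin θ)^2 + (r * Real.cos θ)^2 = r^2 := by
      nlinarith [Real.sin_sq_add_cos_sq θ]
    rw [he, Real.sqrt_sq hr.1.le]; exact hr.2
  -- differentiability and the fderiv identities
  have setup : ∀ r ∈ Ioo (0:ℝ) (1/2), ∀ θ ∈ Ioo (0:ℝ) π,
      DifferentiableAt ℝ v (cylPt (r * Real.sin θ) (r * Real.cos θ)) ∧
      DifferentiableAt ℝ (fun p : ℝ × ℝ => W p.1 p.2) (r * Real.sin θ, r * Real.cos θ) ∧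
      fderiv ℝ (fun p : ℝ × ℝ => W p.1 p.2) (r * Real.sin θ, r * Real.cos θ) (1, 0)
        = 2 * (r * Real.sin θ) * Real.exp (4 * u (cylPt (r * Real.sin θ) (r * Real.cos θ))) *
          fderiv ℝ v (cylPt (r * Real.sin θ) (r * Real.cos θ)) (e3 2) ∧
      fderiv ℝ (fun p : ℝ × ℝ => W p.1 p.2) (r * Real.sin θ, r * Real.cos θ) (0, 1)
        = -(2 * (r * Real.sin θ) * Real.exp (4 * u (cylPt (r * Real.sin θ) (r * Real.cos θ))) *
          fderiv ℝ v (cylPt (r * Real.sin θ) (r * Real.cos θ)) (e3 0)) := by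
    intro r hr θ hθ
    have hq := hq2 r hr θ hθ
    have hxmem : cylPt (r * Real.sin θ) (r * Real.cos θ) ∈ B1 \ axisΓ := S6.mem_domain hr hθ
    have hvd : DifferentiableAt ℝ v (cylPt (r * Real.sin θ) (r * Real.cos θ)) :=
      (hv3.differentiableOn (by norm_num)).differentiableAt (S6.domain_open.mem_nhds hxmem)
    have hWd : DifferentiableAt ℝ (fun p : ℝ × ℝ => W p.1 p.2) (r * Real.sin θ, r * Real.cos θ) :=
      (hWreg.differentiableOn (by norm_num)).differentiableAt (hSW.mem_nhds hq)
    refine ⟨hvd, hWd, ?_, ?_⟩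
    · have e1 : dρ W (r * Real.sin θ) (r * Real.cos θ)
          = fderiv ℝ (fun p : ℝ × ℝ => W p.1 p.2) (r * Real.sin θ, r * Real.cos θ) (1, 0) :=
        S6.dρ_eq W (r * Real.sin θ, r * Real.cos θ) hWd
      have e2 : dρ W (r * Real.sin θ) (r * Real.cos θ)
          = 2 * (r * Real.sin θ) *
            Real.exp (4 * u (cylPt (r * Real.sin θ) (r * Real.cos θ))) *
            dz (fun ρ z => v (cylPt ρ z)) (r * Real.sin θ) (r * Real.cos θ) :=
        hWρ (r * Real.sin θ, r * Real.cos θ) hq.1 hq.2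
      have e3 := S6.dz_cyl v (r * Real.sin θ) (r * Real.cos θ) hvd
      rw [← e1, e2, e3]
    · have e1 : dz W (r * Real.sin θ) (r * Real.cos θ)
          = fderiv ℝ (fun p : ℝ × ℝ => W p.1 p.2) (r * Real.sin θ, r * Real.cos θ) (0, 1) :=
        S6.dz_eq W (r * Real.sin θ, r * Real.cos θ) hWd
      have e2 : dz W (r * Real.sin θ) (r * Real.cos θ)
          = -(2 * (r * Real.sin θ) *
            Real.exp (4 * u (cylPt (r * Real.sin θ) (r * Real.cos θ))) *
            dρ (fun ρ z => v (cylPt ρ z)) (r * Real.sin θ) (r * Real.cos θ)) :=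
        hWz (r * Real.sin θ, r * Real.cos θ) hq.1 hq.2
      have e3 := S6.dρ_cyl v (r * Real.sin θ) (r * Real.cos θ) hvd
      rw [← e1, e2, e3]
  -- hypothesis extraction: the three tangential estimates
  have E1 : ∀ r ∈ Ioo (0:ℝ) (1/2), ∀ θ ∈ Ioo (0:ℝ) π,
      |u (cylPt (r * Real.sin θ) (r * Real.cos θ)) - uab a b θ| ≤ C * r ^ (β:ℝ) := by
    intro r hr θ hθ
    have H := htan 0 0 (by norm_num) r hr θ hθ 0
    simp only [Function.iterate_zero, id_eq] at H
    have l1 := S6.abs_le_covNorm_zero (fun θ' φ' => u (sph r θ' φ') - uab a b θ') θ 0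
    have l2 := mul_nonneg (Real.exp_pos ((3 + α - ((0:ℕ):ℝ)) * uab a b θ)).le
      (S6.covNorm_nonneg 0 (fun θ' φ' => v (sph r θ' φ') - vab a b θ') θ 0)
    have h3 : |u (sph r θ 0) - uab a b θ| ≤ C * r ^ (β:ℝ) := by linarith
    rwa [S6.sph_zero] at h3
  have E3 : ∀ r ∈ Ioo (0:ℝ) (1/2), ∀ θ ∈ Ioo (0:ℝ) π,
      |(r * Real.cos θ * fderiv ℝ v (cylPt (r * Real.sin θ) (r * Real.cos θ)) (e3 0)
          - r * Real.sin θ * fderiv ℝ v (cylPt (r * Real.sin θ) (r * Real.cos θ)) (e3 2))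
        - (-2*a*(1-b^2)*Real.sin θ^3 / S6.Pf b θ^2)|
        ≤ C * r ^ (β:ℝ) * Real.exp (-((2+α) * uab a b θ)) := by
    intro r hr θ hθ
    have hvd := (setup r hr θ hθ).1
    have H := htan 0 1 (by norm_num) r hr θ hθ 0
    simp only [Function.iterate_zero, id_eq] at H
    have l1 := S6.covNorm_nonneg 1 (fun θ' φ' => u (sph r θ' φ') - uab a b θ') θ 0
    have l2 := S6.abs_pdθ_le_covNorm_one (fun θ' φ' => v (sph r θ' φ') - vab a b θ') θ 0
    have hder : HasDerivAt (fun ψ => v (sph r ψ 0) - vab a b ψ)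
        ((r * Real.cos θ * fderiv ℝ v (cylPt (r * Real.sin θ) (r * Real.cos θ)) (e3 0)
          - r * Real.sin θ * fderiv ℝ v (cylPt (r * Real.sin θ) (r * Real.cos θ)) (e3 2))
          - (-2*a*(1-b^2)*Real.sin θ^3 / S6.Pf b θ^2)) θ := by
      have h1 := S6.hasDerivAt_angular v r θ hvd
      have h2 := S6.hasDerivAt_vab ha hb hθ
      have h3 := h1.fun_sub h2
      have efun : (fun ψ => v (cylPt (r * Real.sin ψ) (r * Real.cos ψ)) - vab a b ψ)
          = fun ψ => v (sph r ψ 0) - vab a b ψ := by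
        funext ψ; rw [S6.sph_zero]
      rwa [efun] at h3
    have hpd : pdθ (fun θ' φ' => v (sph r θ' φ') - vab a b θ') θ 0
        = (r * Real.cos θ * fderiv ℝ v (cylPt (r * Real.sin θ) (r * Real.cos θ)) (e3 0)
          - r * Real.sin θ * fderiv ℝ v (cylPt (r * Real.sin θ) (r * Real.cos θ)) (e3 2))
          - (-2*a*(1-b^2)*Real.sin θ^3 / S6.Pf b θ^2) := hder.deriv
    have hXe : (3 + α - ((1:ℕ):ℝ)) = 2 + α := by push_cast; ring
    have hexp : (0:ℝ) < Real.exp ((2 + α) * uab a b θ) := Real.exp_pos _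
    have step : Real.exp ((2 + α) * uab a b θ) *
        |pdθ (fun θ' φ' => v (sph r θ' φ') - vab a b θ') θ 0| ≤ C * r ^ (β:ℝ) := by
      rw [← hXe]
      have h4 := mul_le_mul_of_nonneg_left l2 (Real.exp_pos ((3 + α - ((1:ℕ):ℝ)) * uab a b θ)).le
      linarith
    rw [hpd] at step
    have hfin := mul_le_mul_of_nonneg_left step (Real.exp_pos (-((2+α) * uab a b θ))).le
    calc |(r * Real.cos θ * fderiv ℝ v (cylPt (r * Real.sin θ) (r * Real.cos θ)) (e3 0)
          - r * Real.sin θ * fderiv ℝ v (cylPt (r * Real.sin θ) (r * Real.cos θ)) (e3 2))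
          - (-2*a*(1-b^2)*Real.sin θ^3 / S6.Pf b θ^2)|
        = Real.exp (-((2+α) * uab a b θ)) * (Real.exp ((2 + α) * uab a b θ) *
            |(r * Real.cos θ * fderiv ℝ v (cylPt (r * Real.sin θ) (r * Real.cos θ)) (e3 0)
          - r * Real.sin θ * fderiv ℝ v (cylPt (r * Real.sin θ) (r * Real.cos θ)) (e3 2))
          - (-2*a*(1-b^2)*Real.sin θ^3 / S6.Pf b θ^2)|) := by
          rw [← mul_assoc, ← Real.exp_add]
          norm_num
      _ ≤ Real.exp (-((2+α) * uab a b θ)) * (C * r ^ (β:ℝ)) := hfin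
      _ = C * r ^ (β:ℝ) * Real.exp (-((2+α) * uab a b θ)) := by ring
  have E4 : ∀ r ∈ Ioo (0:ℝ) (1/2), ∀ θ ∈ Ioo (0:ℝ) π,
      |r * (Real.sin θ * fderiv ℝ v (cylPt (r * Real.sin θ) (r * Real.cos θ)) (e3 0)
          + Real.cos θ * fderiv ℝ v (cylPt (r * Real.sin θ) (r * Real.cos θ)) (e3 2))|
        ≤ C * r ^ (β:ℝ) * Real.exp (-((3+α) * uab a b θ)) := by
    intro r hr θ hθ
    have hvd := (setup r hr θ hθ).1
    have H := htan 1 0 (by norm_num) r hr θ hθ 0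
    simp only [Function.iterate_one] at H
    have l1 := S6.covNorm_nonneg 0
      (fun θ' φ' => Dr (fun s θ'' φ'' => u (sph s θ'' φ'') - uab a b θ'') r θ' φ') θ 0
    have l2 := S6.abs_le_covNorm_zero
      (fun θ' φ' => Dr (fun s θ'' φ'' => v (sph s θ'' φ'') - vab a b θ'') r θ' φ') θ 0
    have hder : HasDerivAt (fun t => v (sph t θ 0) - vab a b θ)
        (Real.sin θ * fderiv ℝ v (cylPt (r * Real.sin θ) (r * Real.cos θ)) (e3 0)
          + Real.cos θ * fderiv ℝ v (cylPt (r * Real.sin θ) (r * Real.cos θ)) (e3 2)) r := by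
      have h1 := (S6.hasDerivAt_radial v r θ hvd).sub_const (vab a b θ)
      have efun : (fun t => v (cylPt (t * Real.sin θ) (t * Real.cos θ)) - vab a b θ)
          = fun t => v (sph t θ 0) - vab a b θ := by
        funext t; rw [S6.sph_zero]
      rwa [efun] at h1
    have hDr : Dr (fun s θ'' φ'' => v (sph s θ'' φ'') - vab a b θ'') r θ 0
        = r * (Real.sin θ * fderiv ℝ v (cylPt (r * Real.sin θ) (r * Real.cos θ)) (e3 0)
          + Real.cos θ * fderiv ℝ v (cylPt (r * Real.sin θ) (r * Real.cos θ)) (e3 2)) := by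
      unfold Dr
      rw [hder.deriv]
    have hXe : (3 + α - ((0:ℕ):ℝ)) = 3 + α := by push_cast; ring
    have step : Real.exp ((3 + α) * uab a b θ) *
        |Dr (fun s θ'' φ'' => v (sph s θ'' φ'') - vab a b θ'') r θ 0| ≤ C * r ^ (β:ℝ) := by
      rw [← hXe]
      have h4 := mul_le_mul_of_nonneg_left l2 (Real.exp_pos ((3 + α - ((0:ℕ):ℝ)) * uab a b θ)).le
      linarith
    rw [hDr] at step
    have hfin := mul_le_mul_of_nonneg_left step (Real.exp_pos (-((3+α) * uab a b θ))).le
    calc |r * (Real.sin θ * fderiv ℝ v (cylPt (r * Real.sin θ) (r * Real.cos θ)) (e3 0)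
          + Real.cos θ * fderiv ℝ v (cylPt (r * Real.sin θ) (r * Real.cos θ)) (e3 2))|
        = Real.exp (-((3+α) * uab a b θ)) * (Real.exp ((3 + α) * uab a b θ) *
            |r * (Real.sin θ * fderiv ℝ v (cylPt (r * Real.sin θ) (r * Real.cos θ)) (e3 0)
          + Real.cos θ * fderiv ℝ v (cylPt (r * Real.sin θ) (r * Real.cos θ)) (e3 2))|) := by
          rw [← mul_assoc, ← Real.exp_add]
          norm_num
      _ ≤ Real.exp (-((3+α) * uab a b θ)) * (C * r ^ (β:ℝ)) := hfin
      _ = C * r ^ (β:ℝ) * Real.exp (-((3+α) * uab a b θ)) := by ring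
  -- weight estimates coming from the explicit form of `uab`
  have hone : ∀ θ ∈ Ioo (0:ℝ) π, (1:ℝ) ≤ Real.sin θ ^ (-(1/2) : ℝ) := by
    intro θ hθ
    have hs := Real.sin_pos_of_pos_of_lt_pi hθ.1 hθ.2
    have := Real.rpow_le_rpow_of_exponent_ge hs (Real.sin_le_one θ)
      (by norm_num : (-(1/2):ℝ) ≤ 0)
    rwa [Real.rpow_zero] at this
  have hbase : ∀ θ ∈ Ioo (0:ℝ) π, ∀ t : ℝ, 0 ≤ t → t ≤ 1 →
      (S6.Pf b θ / D) ^ (t : ℝ) ≤ K₂ := by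
    intro θ hθ t ht0 ht1
    have hP := S6.Pf_pos' hb θ
    have h4 := S6.Pf_le_four hb θ
    refine S6.rpow_base_le (by positivity) ?_ ht0 ht1
    exact (div_le_div_iff_of_pos_right hDpos).2 h4
  have w1 : ∀ θ ∈ Ioo (0:ℝ) π,
      Real.sin θ * (Real.exp (4 * uab a b θ) * Real.exp (-((2+α) * uab a b θ)))
        ≤ K₂ * Real.sin θ ^ (-(1/2) : ℝ) := by
    intro θ hθ
    have hs := Real.sin_pos_of_pos_of_lt_pi hθ.1 hθ.2
    have hcomb : Real.exp (4 * uab a b θ) * Real.exp (-((2+α) * uab a b θ))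
        = Real.exp ((2-α) * uab a b θ) := by
      rw [← Real.exp_add]; congr 1; ring
    rw [hcomb, S6.exp_t_uab ha hb hθ (2-α)]
    have b1 : (S6.Pf b θ / D) ^ ((2-α)/2 : ℝ) ≤ K₂ :=
      hbase θ hθ ((2-α)/2) (by linarith [hα.2]) (by linarith [hα.1])
    have b2 : Real.sin θ * Real.sin θ ^ (-(2-α) : ℝ) = Real.sin θ ^ ((α-1) : ℝ) := by
      nth_rewrite 1 [← Real.rpow_one (Real.sin θ)]
      rw [← Real.rpow_add hs]; congr 1; ring
    have b3 : Real.sin θ ^ ((α-1) : ℝ) ≤ Real.sin θ ^ (-(1/2) : ℝ) :=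
      Real.rpow_le_rpow_of_exponent_ge hs (Real.sin_le_one θ) (by linarith [hα.1])
    calc Real.sin θ * ((S6.Pf b θ / D) ^ ((2-α)/2 : ℝ) * Real.sin θ ^ (-(2-α) : ℝ))
        = (S6.Pf b θ / D) ^ ((2-α)/2 : ℝ) * (Real.sin θ * Real.sin θ ^ (-(2-α) : ℝ)) := by ring
      _ ≤ K₂ * Real.sin θ ^ (-(1/2) : ℝ) := by
          rw [b2]
          exact mul_le_mul b1 b3 (Real.rpow_nonneg hs.le _) hK2pos.le
  have w2 : ∀ θ ∈ Ioo (0:ℝ) π,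
      Real.sin θ * (Real.exp (4 * uab a b θ) * Real.exp (-((3+α) * uab a b θ))) ≤ K₂ := by
    intro θ hθ
    have hs := Real.sin_pos_of_pos_of_lt_pi hθ.1 hθ.2
    have hcomb : Real.exp (4 * uab a b θ) * Real.exp (-((3+α) * uab a b θ))
        = Real.exp ((1-α) * uab a b θ) := by
      rw [← Real.exp_add]; congr 1; ring
    rw [hcomb, S6.exp_t_uab ha hb hθ (1-α)]
    have b1 : (S6.Pf b θ / D) ^ ((1-α)/2 : ℝ) ≤ K₂ :=
      hbase θ hθ ((1-α)/2) (by linarith [hα.2]) (by linarith [hα.1])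
    have b2 : Real.sin θ * Real.sin θ ^ (-(1-α) : ℝ) = Real.sin θ ^ (α : ℝ) := by
      nth_rewrite 1 [← Real.rpow_one (Real.sin θ)]
      rw [← Real.rpow_add hs]; congr 1; ring
    have b3 : Real.sin θ ^ (α : ℝ) ≤ 1 :=
      Real.rpow_le_one hs.le (Real.sin_le_one θ) (by linarith [hα.1])
    calc Real.sin θ * ((S6.Pf b θ / D) ^ ((1-α)/2 : ℝ) * Real.sin θ ^ (-(1-α) : ℝ))
        = (S6.Pf b θ / D) ^ ((1-α)/2 : ℝ) * (Real.sin θ * Real.sin θ ^ (-(1-α) : ℝ)) := by ring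
      _ ≤ K₂ * 1 := by
          rw [b2]
          exact mul_le_mul b1 b3 (Real.rpow_nonneg hs.le _) hK2pos.le
      _ = K₂ := mul_one _
  -- smallness of the exponential correction
  have hedel : ∀ r ∈ Ioo (0:ℝ) (1/2), ∀ θ ∈ Ioo (0:ℝ) π,
      Real.exp (4 * (u (cylPt (r * Real.sin θ) (r * Real.cos θ)) - uab a b θ)) ≤ Real.exp (4*C)
      ∧ |Real.exp (4 * (u (cylPt (r * Real.sin θ) (r * Real.cos θ)) - uab a b θ)) - 1|
          ≤ 4 * C * Real.exp (4*C) * r ^ (β:ℝ) := by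
    intro r hr θ hθ
    have hE1 := E1 r hr θ hθ
    have hrb1 : r ^ (β:ℝ) ≤ 1 := Real.rpow_le_one hr.1.le (by linarith [hr.2]) hβ.le
    have hrb0 : (0:ℝ) ≤ r ^ (β:ℝ) := Real.rpow_nonneg hr.1.le _
    have habs : |4 * (u (cylPt (r * Real.sin θ) (r * Real.cos θ)) - uab a b θ)| ≤ 4 * C := by
      rw [abs_mul]
      have : |(4:ℝ)| = 4 := by norm_num
      rw [this]
      nlinarith
    constructor
    · exact Real.exp_le_exp.2 (le_trans (le_abs_self _) habs)
    · have h := S6.abs_exp_sub_one_le (4 * (u (cylPt (r * Real.sin θ) (r * Real.cos θ)) - uab a b θ))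
      have h1 : |4 * (u (cylPt (r * Real.sin θ) (r * Real.cos θ)) - uab a b θ)|
          ≤ 4 * (C * r ^ (β:ℝ)) := by
        rw [abs_mul]
        have : |(4:ℝ)| = 4 := by norm_num
        rw [this]
        nlinarith
      have h2 : Real.exp |4 * (u (cylPt (r * Real.sin θ) (r * Real.cos θ)) - uab a b θ)|
          ≤ Real.exp (4*C) := Real.exp_le_exp.2 habs
      calc |Real.exp (4 * (u (cylPt (r * Real.sin θ) (r * Real.cos θ)) - uab a b θ)) - 1|
          ≤ _ := h
        _ ≤ (4 * (C * r ^ (β:ℝ))) * Real.exp (4*C) :=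
            mul_le_mul h1 h2 (Real.exp_pos _).le (by positivity)
        _ = 4 * C * Real.exp (4*C) * r ^ (β:ℝ) := by ring
  have keybound : ∀ r ∈ Ioo (0:ℝ) (1/2), ∀ θ ∈ Ioo (0:ℝ) π,
      ∃ d : ℝ, HasDerivAt (fun t => W (t * Real.sin θ) (t * Real.cos θ)) d r ∧
        |d - 1/a| ≤ (K₄ * Real.sin θ ^ (-(1/2) : ℝ)) * r ^ (β:ℝ) := by
    intro r hr θ hθ
    have hs : 0 < Real.sin θ := Real.sin_pos_of_pos_of_lt_pi hθ.1 hθ.2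
    have hrb0 : (0:ℝ) ≤ r ^ (β:ℝ) := Real.rpow_nonneg hr.1.le _
    obtain ⟨hvd, hWd, h10, h01⟩ := setup r hr θ hθ
    have hE3 := E3 r hr θ hθ
    have hed := hedel r hr θ hθ
    have hw1 := w1 θ hθ
    have h1s := hone θ hθ
    have hRd := S6.hasDerivAt_W_radial W r θ (r * Real.sin θ, r * Real.cos θ) rfl hWd
    rw [h10, h01] at hRd
    refine ⟨_, hRd, ?_⟩
    set A := fderiv ℝ v (cylPt (r * Real.sin θ) (r * Real.cos θ)) (e3 0) with hA
    set B := fderiv ℝ v (cylPt (r * Real.sin θ) (r * Real.cos θ)) (e3 2) with hB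
    set U := u (cylPt (r * Real.sin θ) (r * Real.cos θ)) with hU
    set E := Real.exp (4 * uab a b θ) with hE
    set eδ := Real.exp (4 * (U - uab a b θ)) with heδ
    set m := -2*a*(1-b^2)*Real.sin θ^3 / S6.Pf b θ^2 with hm
    set δ1 := (r * Real.cos θ * A - r * Real.sin θ * B) - m with hδ1
    have hEpos : 0 < E := Real.exp_pos _
    have heδpos : 0 < eδ := Real.exp_pos _
    have hXpos : 0 < Real.exp (-((2+α) * uab a b θ)) := Real.exp_pos _
    have hmodel : -2 * Real.sin θ * E * m = 1/a := S6.model_identity ha hb hθ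
    have h4U : Real.exp (4 * U) = E * eδ := by rw [hE, heδ, ← Real.exp_add]; congr 1; ring
    have hdec : (Real.sin θ * (2 * (r * Real.sin θ) * Real.exp (4 * U) * B)
        + Real.cos θ * (-(2 * (r * Real.sin θ) * Real.exp (4 * U) * A))) - 1/a
        = (-2 * Real.sin θ * E * m) * (eδ - 1) + (-2 * Real.sin θ * E * eδ) * δ1 := by
      rw [← hmodel, h4U, hδ1]
      ring
    rw [hdec]
    have habs : |(-2 * Real.sin θ * E * m) * (eδ - 1) + (-2 * Real.sin θ * E * eδ) * δ1|
        ≤ (1/a) * |eδ - 1| + (2 * Real.sin θ * E * eδ) * |δ1| := by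
      refine (abs_add_le _ _).trans ?_
      rw [abs_mul (-2 * Real.sin θ * E * m) (eδ - 1), abs_mul (-2 * Real.sin θ * E * eδ) δ1]
      have p1 : |(-2 * Real.sin θ * E * m)| = 1/a := by
        rw [hmodel, abs_of_pos (one_div_pos.2 ha)]
      have p2 : |(-2 * Real.sin θ * E * eδ)| = 2 * Real.sin θ * E * eδ := by
        rw [show -2 * Real.sin θ * E * eδ = -(2 * Real.sin θ * E * eδ) by ring, abs_neg,
          abs_of_pos (mul_pos (mul_pos (mul_pos two_pos hs) hEpos) heδpos)]
      rw [p1, p2]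
    have t1 : (1/a) * |eδ - 1| ≤ (4*C*Real.exp (4*C)/a) * r ^ (β:ℝ) := by
      calc (1/a) * |eδ - 1| ≤ (1/a) * (4 * C * Real.exp (4*C) * r ^ (β:ℝ)) :=
          mul_le_mul_of_nonneg_left hed.2 (one_div_nonneg.2 ha.le)
        _ = (4*C*Real.exp (4*C)/a) * r ^ (β:ℝ)  := by ring
    have t2 : (2 * Real.sin θ * E * eδ) * |δ1| ≤
        (2*C*Real.exp (4*C)*K₂) * (Real.sin θ ^ (-(1/2):ℝ) * r ^ (β:ℝ)) := by
      calc (2 * Real.sin θ * E * eδ) * |δ1|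
          ≤ (2 * Real.sin θ * E * eδ) * (C * r ^ (β:ℝ) * Real.exp (-((2+α) * uab a b θ))) :=
            mul_le_mul_of_nonneg_left hE3
              (mul_pos (mul_pos (mul_pos two_pos hs) hEpos) heδpos).le
        _ = ((2 * C * r ^ (β:ℝ)) * eδ) *
            (Real.sin θ * (E * Real.exp (-((2+α) * uab a b θ)))) := by ring
        _ ≤ ((2 * C * r ^ (β:ℝ)) * Real.exp (4*C)) * (K₂ * Real.sin θ ^ (-(1/2):ℝ)) := by
            refine mul_le_mul (mul_le_mul_of_nonneg_left hed.1
                (mul_nonneg (mul_nonneg two_pos.le hC.le) hrb0)) hw1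
              (mul_nonneg hs.le (mul_nonneg hEpos.le (Real.exp_pos _).le))
              (mul_nonneg (mul_nonneg (mul_nonneg two_pos.le hC.le) hrb0) (Real.exp_pos _).le)
        _ = (2*C*Real.exp (4*C)*K₂) * (Real.sin θ ^ (-(1/2):ℝ) * r ^ (β:ℝ)) := by ring
    have hfirst : (4*C*Real.exp (4*C)/a) * r ^ (β:ℝ)
        ≤ (4*C*Real.exp (4*C)/a) * (Real.sin θ ^ (-(1/2):ℝ) * r ^ (β:ℝ)) := by
      have := mul_le_mul_of_nonneg_right h1s hrb0
      rw [one_mul] at this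
      exact mul_le_mul_of_nonneg_left this
        (div_nonneg (mul_nonneg (mul_nonneg (by norm_num : (0:ℝ) ≤ 4) hC.le)
          (Real.exp_pos _).le) ha.le)
    calc |(-2 * Real.sin θ * E * m) * (eδ - 1) + (-2 * Real.sin θ * E * eδ) * δ1|
        ≤ (1/a) * |eδ - 1| + (2 * Real.sin θ * E * eδ) * |δ1| := habs
      _ ≤ (4*C*Real.exp (4*C)/a) * (Real.sin θ ^ (-(1/2):ℝ) * r ^ (β:ℝ))
          + (2*C*Real.exp (4*C)*K₂) * (Real.sin θ ^ (-(1/2):ℝ) * r ^ (β:ℝ)) := by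
          linarith
      _ = (K₄ * Real.sin θ ^ (-(1/2) : ℝ)) * r ^ (β:ℝ) := by rw [hK4]; ring
  have angbound : ∀ r ∈ Ioo (0:ℝ) (1/2), ∀ θ ∈ Ioo (0:ℝ) π,
      ∃ d : ℝ, HasDerivAt (fun t => W (r * Real.sin t) (r * Real.cos t)) d θ ∧
        |d| ≤ K₅ * r ^ ((1+β:ℝ)) := by
    intro r hr θ hθ
    have hs : 0 < Real.sin θ := Real.sin_pos_of_pos_of_lt_pi hθ.1 hθ.2
    have hrb0 : (0:ℝ) ≤ r ^ (β:ℝ) := Real.rpow_nonneg hr.1.le _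
    obtain ⟨hvd, hWd, h10, h01⟩ := setup r hr θ hθ
    have hE4 := E4 r hr θ hθ
    have hed := hedel r hr θ hθ
    have hw2 := w2 θ hθ
    have hAd := S6.hasDerivAt_W_angular W r θ (r * Real.sin θ, r * Real.cos θ) rfl hWd
    rw [h10, h01] at hAd
    refine ⟨_, hAd, ?_⟩
    set A := fderiv ℝ v (cylPt (r * Real.sin θ) (r * Real.cos θ)) (e3 0) with hA
    set B := fderiv ℝ v (cylPt (r * Real.sin θ) (r * Real.cos θ)) (e3 2) with hB
    set U := u (cylPt (r * Real.sin θ) (r * Real.cos θ)) with hU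
    set E := Real.exp (4 * uab a b θ) with hE
    set eδ := Real.exp (4 * (U - uab a b θ)) with heδ
    have hEpos : 0 < E := Real.exp_pos _
    have heδpos : 0 < eδ := Real.exp_pos _
    have h4U : Real.exp (4 * U) = E * eδ := by rw [hE, heδ, ← Real.exp_add]; congr 1; ring
    have heq : (r * Real.cos θ) * (2 * (r * Real.sin θ) * Real.exp (4 * U) * B)
        - (r * Real.sin θ) * (-(2 * (r * Real.sin θ) * Real.exp (4 * U) * A))
        = (2 * Real.sin θ * Real.exp (4 * U) * r) *
          (r * (Real.sin θ * A + Real.cos θ * B)) := by ring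
    rw [heq, abs_mul,
      abs_of_pos (mul_pos (mul_pos (mul_pos two_pos hs) (Real.exp_pos _)) hr.1)]
    have hr1β : r * r ^ (β:ℝ) = r ^ ((1+β:ℝ)) := by
      rw [Real.rpow_add hr.1, Real.rpow_one]
    calc (2 * Real.sin θ * Real.exp (4 * U) * r) *
          |r * (Real.sin θ * A + Real.cos θ * B)|
        ≤ (2 * Real.sin θ * Real.exp (4 * U) * r) *
          (C * r ^ (β:ℝ) * Real.exp (-((3+α) * uab a b θ))) :=
          mul_le_mul_of_nonneg_left hE4
            (mul_pos (mul_pos (mul_pos two_pos hs) (Real.exp_pos _)) hr.1).le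
      _ = ((2 * C * (r * r ^ (β:ℝ))) * eδ) *
          (Real.sin θ * (E * Real.exp (-((3+α) * uab a b θ)))) := by rw [h4U]; ring
      _ ≤ ((2 * C * (r * r ^ (β:ℝ))) * Real.exp (4*C)) * K₂ := by
          have hrr : (0:ℝ) ≤ 2 * C * (r * r ^ (β:ℝ)) :=
            mul_nonneg (mul_nonneg two_pos.le hC.le) (mul_nonneg hr.1.le hrb0)
          refine mul_le_mul (mul_le_mul_of_nonneg_left hed.1 hrr) hw2
            (mul_nonneg hs.le (mul_nonneg hEpos.le (Real.exp_pos _).le))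
            (mul_nonneg hrr (Real.exp_pos _).le)
      _ = K₅ * r ^ ((1+β:ℝ)) := by rw [← hr1β, hK5]; ring
  -- integrate radially
  have gkey : ∀ θ ∈ Ioo (0:ℝ) π, ∃ L : ℝ, ∀ r ∈ Ioo (0:ℝ) (1/2),
      |(W (r * Real.sin θ) (r * Real.cos θ) - r/a) - L| ≤
        (K₄ * Real.sin θ ^ (-(1/2) : ℝ)) / (1 + β) * r ^ ((1+β:ℝ)) := by
    intro θ hθ
    have hs : 0 < Real.sin θ := Real.sin_pos_of_pos_of_lt_pi hθ.1 hθ.2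
    refine S6.key_int' _ (K₄ * Real.sin θ ^ (-(1/2) : ℝ)) β hβ (by positivity) ?_
    intro t ht
    obtain ⟨d, hd, hbd⟩ := keybound t ht θ hθ
    refine ⟨d - 1/a, ?_, hbd⟩
    have h2 : HasDerivAt (fun t : ℝ => t / a) (1/a) t := by
      simpa using (hasDerivAt_id t).div_const a
    exact hd.sub h2
  -- the limit is independent of θ
  obtain ⟨w₀, hw₀⟩ := gkey (π/2) ⟨by linarith [Real.pi_pos], by linarith [Real.pi_pos]⟩
  have hconst : ∀ θ ∈ Ioo (0:ℝ) π, ∀ L : ℝ,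
      (∀ r ∈ Ioo (0:ℝ) (1/2), |(W (r * Real.sin θ) (r * Real.cos θ) - r/a) - L| ≤
        (K₄ * Real.sin θ ^ (-(1/2) : ℝ)) / (1 + β) * r ^ ((1+β:ℝ))) → L = w₀ := by
    intro θ hθ L hL
    have hs : 0 < Real.sin θ := Real.sin_pos_of_pos_of_lt_pi hθ.1 hθ.2
    have hπ2 : (π/2 : ℝ) ∈ Ioo (0:ℝ) π := ⟨by linarith [Real.pi_pos], by linarith [Real.pi_pos]⟩
    have key : ∀ r ∈ Ioo (0:ℝ) (1/2), |L - w₀| ≤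
        ((K₄ * Real.sin θ ^ (-(1/2) : ℝ)) / (1 + β) + K₄ / (1 + β) + K₅ * π)
          * r ^ ((1+β:ℝ)) := by
      intro r hr
      have h1 := hL r hr
      have h2 := hw₀ r hr
      have h3 : |W (r * Real.sin θ) (r * Real.cos θ) -
          W (r * Real.sin (π/2)) (r * Real.cos (π/2))| ≤ K₅ * π * r ^ ((1+β:ℝ)) := by
        have hmvt := S6.mvt_bound' (fun ψ => W (r * Real.sin ψ) (r * Real.cos ψ))
          (Ioo (0:ℝ) π) (convex_Ioo _ _) (K₅ * r ^ ((1+β:ℝ)))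
          (fun ψ hψ => angbound r hr ψ hψ) hπ2 hθ
        have habs : |θ - π/2| ≤ π := by
          rw [abs_le]; constructor <;> [linarith [hθ.1, hπ2.2]; linarith [hθ.2, hπ2.1]]
        calc |W (r * Real.sin θ) (r * Real.cos θ) -
            W (r * Real.sin (π/2)) (r * Real.cos (π/2))| ≤ (K₅ * r ^ ((1+β:ℝ))) * |θ - π/2| := hmvt
          _ ≤ (K₅ * r ^ ((1+β:ℝ))) * π := by
            apply mul_le_mul_of_nonneg_left habs
            have : (0:ℝ) ≤ r ^ ((1+β:ℝ)) := Real.rpow_nonneg hr.1.le _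
            positivity
          _ = K₅ * π * r ^ ((1+β:ℝ)) := by ring
      simp only [Real.sin_pi_div_two, Real.cos_pi_div_two, Real.one_rpow] at h2 h3
      have e : L - w₀ = -((W (r * Real.sin θ) (r * Real.cos θ) - r/a) - L)
          + (W (r * Real.sin θ) (r * Real.cos θ) - W (r * 1) (r * 0))
          + ((W (r * 1) (r * 0) - r/a) - w₀) := by ring
      have tri : |L - w₀| ≤ |(W (r * Real.sin θ) (r * Real.cos θ) - r/a) - L|
            + |W (r * Real.sin θ) (r * Real.cos θ) - W (r * 1) (r * 0)|
            + |(W (r * 1) (r * 0) - r/a) - w₀| := by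
        rw [e]
        refine (abs_add_three _ _ _).trans ?_
        rw [abs_neg]
      calc |L - w₀| ≤ K₄ * Real.sin θ ^ (-(1/2) : ℝ) / (1 + β) * r ^ ((1+β:ℝ))
            + K₅ * π * r ^ ((1+β:ℝ)) + K₄ * 1 / (1 + β) * r ^ ((1+β:ℝ)) := by linarith
        _ = ((K₄ * Real.sin θ ^ (-(1/2) : ℝ)) / (1 + β) + K₄ / (1 + β) + K₅ * π)
            * r ^ ((1+β:ℝ)) := by ring
    have h0 : |L - w₀| ≤ 0 := S6.le_zero_of_le_rpow hβ key
    have h1 : L - w₀ = 0 := abs_eq_zero.1 (le_antisymm h0 (abs_nonneg _))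
    linarith
  refine ⟨w₀, K₄ / (1 + β), by positivity, β, hβ, ?_⟩
  intro r hr θ hθ
  have hs : 0 < Real.sin θ := Real.sin_pos_of_pos_of_lt_pi hθ.1 hθ.2
  obtain ⟨L, hL⟩ := gkey θ hθ
  have hLw := hconst θ hθ L hL
  have h1 := hL r hr
  rw [hLw] at h1
  have e : W (r * Real.sin θ) (r * Real.cos θ) - w₀ - r / a
      = (W (r * Real.sin θ) (r * Real.cos θ) - r/a) - w₀ := by ring
  rw [e]
  calc |(W (r * Real.sin θ) (r * Real.cos θ) - r/a) - w₀|
      ≤ (K₄ * Real.sin θ ^ (-(1/2) : ℝ)) / (1 + β) * r ^ ((1+β:ℝ)) := h1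
    _ = K₄ / (1 + β) * r ^ (1 + β) * Real.sin θ ^ (-(1/2) : ℝ) := by ring
end
end
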